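/- arXiv:2405.07512 — 11 statements merged into one kernel-verified Lean document; each statement's English description precedes it below -/
import Mathlib

section
/- Let (X, C) be a convexity space (∅, X ∈ C, every singleton is in C, and C is closed under arbitrary intersections) that is domain-finite. Then the following four conditions are equivalent: (i) C satisfies the separation axiom S3, i.e., every convex set A and every point x0 ∉ A are separated by complementary halfspaces; (ii) every polytope P and every point x0 ∉ P are separated by complementary halfspaces; (iii) for every polytope P and every point x0 ∉ P, the shadow x0/P is convex; (iv) for every convex set A and every point x0 ∉ A, the shadow x0/A is convex. -/
/-- A convexity space: `∅` and `X` are convex, singletons are convex, and the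
family of convex sets is closed under arbitrary intersections. -/
structure ConvexitySpace (X : Type*) where
  /-- The family of convex sets. -/
  C : Set (Set X)
  empty_mem : ∅ ∈ C
  univ_mem : Set.univ ∈ C
  singleton_mem : ∀ x : X, {x} ∈ C
  sInter_mem : ∀ S : Set (Set X), S ⊆ C → ⋂₀ S ∈ C

namespace ConvexitySpace

variable {X : Type*} (𝒞 : ConvexitySpace X)

/-- The convex hull of `A`: the intersection of all convex sets containing `A`. -/
def conv (A : Set X) : Set X :=
  ⋂₀ {B : Set X | B ∈ 𝒞.C ∧ A ⊆ B}

/-- Domain-finiteness: the convex hull of any set is the union of convex hulls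
of its finite subsets. -/
def DomainFinite : Prop :=
  ∀ A : Set X,
    𝒞.conv A = ⋃₀ {P : Set X | ∃ F : Set X, F ⊆ A ∧ F.Finite ∧ P = 𝒞.conv F}

/-- A polytope: the convex hull of a finite set of points. -/
def IsPolytope (P : Set X) : Prop :=
  ∃ F : Set X, F.Finite ∧ P = 𝒞.conv F

/-- A halfspace: a convex set with convex complement. -/
def IsHalfspace (H : Set X) : Prop :=
  H ∈ 𝒞.C ∧ Hᶜ ∈ 𝒞.C

/-- `A` and `B` are separated by complementary halfspaces. -/
def Sep (A B : Set X) : Prop :=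
  ∃ H : Set X, 𝒞.IsHalfspace H ∧ A ⊆ H ∧ B ⊆ Hᶜ

/-- The shadow `A/B = {x | conv(B ∪ {x}) ∩ A ≠ ∅}`. -/
def shadow (A B : Set X) : Set X :=
  {x | (𝒞.conv (B ∪ {x}) ∩ A).Nonempty}

/-- The shadow `x0/A = {x | x0 ∈ conv(A ∪ {x})}` of a point `x0` with respect to `A`. -/
def shadowPt (x0 : X) (A : Set X) : Set X :=
  {x | x0 ∈ 𝒞.conv (A ∪ {x})}

/-- The separation axiom `S3`: every convex set and every point outside it are
separated by complementary halfspaces. -/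
def S3 : Prop :=
  ∀ (A : Set X) (x0 : X), A ∈ 𝒞.C → x0 ∉ A → 𝒞.Sep {x0} A

end ConvexitySpace

namespace ConvexitySpace

variable {X : Type*} (𝒞 : ConvexitySpace X)

theorem subset_conv' (A : Set X) : A ⊆ 𝒞.conv A := by
  intro x hx B hB
  exact hB.2 hx

theorem conv_mem' (A : Set X) : 𝒞.conv A ∈ 𝒞.C :=
  𝒞.sInter_mem _ fun _ hB => hB.1

theorem conv_min' {A B : Set X} (hB : B ∈ 𝒞.C) (hAB : A ⊆ B) : 𝒞.conv A ⊆ B :=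
  fun _ hx => hx B ⟨hB, hAB⟩

theorem conv_mono' {A B : Set X} (h : A ⊆ B) : 𝒞.conv A ⊆ 𝒞.conv B :=
  𝒞.conv_min' (𝒞.conv_mem' B) (h.trans (𝒞.subset_conv' B))

theorem conv_of_mem' {A : Set X} (hA : A ∈ 𝒞.C) : 𝒞.conv A = A :=
  Set.Subset.antisymm (𝒞.conv_min' hA Set.Subset.rfl) (𝒞.subset_conv' A)

theorem conv_conv_union' (F : Set X) (x : X) :
    𝒞.conv (𝒞.conv F ∪ {x}) = 𝒞.conv (F ∪ {x}) := by
  apply Set.Subset.antisymm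
  · apply 𝒞.conv_min' (𝒞.conv_mem' _)
    apply Set.union_subset
    · exact 𝒞.conv_mono' Set.subset_union_left
    · exact (Set.singleton_subset_iff.mpr
        (𝒞.subset_conv' _ (Set.mem_union_right _ rfl)))
  · exact 𝒞.conv_mono' (Set.union_subset_union_left _ (𝒞.subset_conv' F))

/-- Directed unions of convex sets are convex in a domain-finite space. -/
theorem sUnion_mem_of_directed' (hdf : 𝒞.DomainFinite) {D : Set (Set X)}
    (hD : D ⊆ 𝒞.C) (hdir : DirectedOn (· ⊆ ·) D) (hne : D.Nonempty) :
    ⋃₀ D ∈ 𝒞.C := by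
  have key : 𝒞.conv (⋃₀ D) = ⋃₀ D := by
    apply Set.Subset.antisymm _ (𝒞.subset_conv' _)
    rw [hdf]
    rintro x ⟨P, ⟨F, hFsub, hFfin, rfl⟩, hxP⟩
    obtain ⟨B, hB, hFB⟩ :=
      DirectedOn.exists_mem_subset_of_finset_subset_biUnion (f := id) hne hdir
        (s := hFfin.toFinset)
        (by rw [hFfin.coe_toFinset]; simpa [Set.sUnion_eq_biUnion] using hFsub)
    rw [hFfin.coe_toFinset] at hFB
    exact ⟨B, hB, 𝒞.conv_min' (hD hB) hFB hxP⟩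
  rw [← key]; exact 𝒞.conv_mem' _

end ConvexitySpace


/-- For a domain-finite convexity space the following are
equivalent: (i) `S3`; (ii) every polytope and every point outside it are
separated by complementary halfspaces; (iii) the shadow `x0/P` is convex for
every polytope `P` and point `x0 ∉ P`; (iv) the shadow `x0/A` is convex for
every convex set `A` and point `x0 ∉ A`. -/
theorem stmt0 {X : Type*} (𝒞 : ConvexitySpace X) (hdf : 𝒞.DomainFinite) :
    List.TFAE
      [𝒞.S3,
       ∀ (P : Set X) (x0 : X), 𝒞.IsPolytope P → x0 ∉ P → 𝒞.Sep {x0} P,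
       ∀ (P : Set X) (x0 : X), 𝒞.IsPolytope P → x0 ∉ P → 𝒞.shadowPt x0 P ∈ 𝒞.C,
       ∀ (A : Set X) (x0 : X), A ∈ 𝒞.C → x0 ∉ A → 𝒞.shadowPt x0 A ∈ 𝒞.C] := by
  tfae_have 1 → 2 := by
    intro h1 P x0 hP hx0
    obtain ⟨F, hFfin, rfl⟩ := hP
    exact h1 _ x0 (𝒞.conv_mem' F) hx0
  tfae_have 2 → 3 := by
    intro h2 P x0 hP hx0
    obtain ⟨F, hFfin, rfl⟩ := hP
    have key : 𝒞.shadowPt x0 (𝒞.conv F) =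
        ⋂₀ {H | 𝒞.IsHalfspace H ∧ x0 ∈ H ∧ 𝒞.conv F ⊆ Hᶜ} := by
      ext x
      simp only [ConvexitySpace.shadowPt, Set.mem_setOf_eq, Set.mem_sInter]
      constructor
      · rintro hx H ⟨hH, hx0H, hPH⟩
        by_contra hxH
        have hsub : 𝒞.conv (𝒞.conv F ∪ {x}) ⊆ Hᶜ :=
          𝒞.conv_min' hH.2 (Set.union_subset hPH (Set.singleton_subset_iff.mpr hxH))
        exact hsub hx hx0H
      · intro hall
        by_contra hx
        have hpoly : 𝒞.IsPolytope (𝒞.conv (𝒞.conv F ∪ {x})) :=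
          ⟨F ∪ {x}, hFfin.union (Set.finite_singleton x), (𝒞.conv_conv_union' F x).symm ▸ rfl⟩
        obtain ⟨H, hH, hx0H, hQH⟩ := h2 _ x0 hpoly hx
        have hxH := hall H ⟨hH, hx0H rfl,
          fun y hy => hQH (𝒞.subset_conv' _ (Set.mem_union_left _ hy))⟩
        exact hQH (𝒞.subset_conv' _ (Set.mem_union_right _ rfl)) hxH
    rw [key]
    exact 𝒞.sInter_mem _ fun H hH => hH.1.1
  tfae_have 3 → 4 := by
    intro h3 A x0 hA hx0
    have key : 𝒞.shadowPt x0 A =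
        ⋃₀ {S | ∃ F : Set X, F ⊆ A ∧ F.Finite ∧ S = 𝒞.shadowPt x0 (𝒞.conv F)} := by
      ext x
      simp only [ConvexitySpace.shadowPt, Set.mem_setOf_eq, Set.mem_sUnion]
      constructor
      · intro hx
        rw [hdf] at hx
        obtain ⟨P, ⟨G, hGsub, hGfin, rfl⟩, hxP⟩ := hx
        refine ⟨_, ⟨G \ {x}, ?_, hGfin.diff, rfl⟩, ?_⟩
        · intro y hy
          rcases hGsub hy.1 with h | h
          · exact h
          · exact absurd h hy.2
        · show x0 ∈ 𝒞.conv (𝒞.conv (G \ {x}) ∪ {x})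
          rw [𝒞.conv_conv_union']
          exact 𝒞.conv_mono' (fun y hy => by
            by_cases hyx : y = x
            · exact Set.mem_union_right _ hyx
            · exact Set.mem_union_left _ ⟨hy, hyx⟩) hxP
      · rintro ⟨S, ⟨F, hFA, hFfin, rfl⟩, hx⟩
        have hx' : x0 ∈ 𝒞.conv (F ∪ {x}) := (𝒞.conv_conv_union' F x) ▸ hx
        exact 𝒞.conv_mono' (Set.union_subset_union_left _ hFA) hx'
    rw [key]
    apply 𝒞.sUnion_mem_of_directed' hdf
    · rintro S ⟨F, hFA, hFfin, rfl⟩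
      apply h3 _ x0 ⟨F, hFfin, rfl⟩
      intro hx0'
      exact hx0 (𝒞.conv_min' hA hFA hx0')
    · rintro S ⟨F, hFA, hFfin, rfl⟩ S' ⟨F', hF'A, hF'fin, rfl⟩
      refine ⟨𝒞.shadowPt x0 (𝒞.conv (F ∪ F')),
        ⟨F ∪ F', Set.union_subset hFA hF'A, hFfin.union hF'fin, rfl⟩, ?_, ?_⟩
      · intro y hy
        have : x0 ∈ 𝒞.conv (F ∪ {y}) := (𝒞.conv_conv_union' F y) ▸ hy
        show x0 ∈ 𝒞.conv (𝒞.conv (F ∪ F') ∪ {y})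
        rw [𝒞.conv_conv_union']
        exact 𝒞.conv_mono' (Set.union_subset_union_left _ Set.subset_union_left) this
      · intro y hy
        have : x0 ∈ 𝒞.conv (F' ∪ {y}) := (𝒞.conv_conv_union' F' y) ▸ hy
        show x0 ∈ 𝒞.conv (𝒞.conv (F ∪ F') ∪ {y})
        rw [𝒞.conv_conv_union']
        exact 𝒞.conv_mono' (Set.union_subset_union_left _ Set.subset_union_right) this
    · exact ⟨𝒞.shadowPt x0 (𝒞.conv ∅), ∅, Set.empty_subset _, Set.finite_empty, rfl⟩
  tfae_have 4 → 1 := by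
    intro h4 A x0 hA hx0
    set S : Set (Set X) := {M | M ∈ 𝒞.C ∧ A ⊆ M ∧ x0 ∉ M} with hS
    have hchainU : ∀ c ⊆ S, IsChain (· ⊆ ·) c → c.Nonempty →
        ∃ ub ∈ S, ∀ s ∈ c, s ⊆ ub := by
      intro c hcS hchain hcne
      refine ⟨⋃₀ c, ⟨𝒞.sUnion_mem_of_directed' hdf (fun B hB => (hcS hB).1)
        hchain.directedOn hcne, ?_, ?_⟩, fun s hs => Set.subset_sUnion_of_mem hs⟩
      · obtain ⟨B, hB⟩ := hcne
        exact (hcS hB).2.1.trans (Set.subset_sUnion_of_mem hB)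
      · rintro ⟨B, hB, hx⟩
        exact (hcS hB).2.2 hx
    obtain ⟨M, hAM, hMmax⟩ := zorn_subset_nonempty S hchainU A ⟨hA, Set.Subset.rfl, hx0⟩
    obtain ⟨hMC, hAM', hx0M⟩ := hMmax.prop
    have hshadow : 𝒞.shadowPt x0 M = Mᶜ := by
      ext y
      simp only [ConvexitySpace.shadowPt, Set.mem_setOf_eq, Set.mem_compl_iff]
      constructor
      · intro hy hyM
        have hMy : M ∪ {y} = M := Set.union_eq_self_of_subset_right
          (Set.singleton_subset_iff.mpr hyM)
        rw [hMy, 𝒞.conv_of_mem' hMC] at hy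
        exact hx0M hy
      · intro hyM
        by_contra hy
        have hmem : 𝒞.conv (M ∪ {y}) ∈ S :=
          ⟨𝒞.conv_mem' _, hAM'.trans (Set.subset_union_left.trans (𝒞.subset_conv' _)), hy⟩
        have hle : 𝒞.conv (M ∪ {y}) ⊆ M :=
          hMmax.2 hmem (Set.subset_union_left.trans (𝒞.subset_conv' _))
        exact hyM (hle (𝒞.subset_conv' _ (Set.mem_union_right _ rfl)))
    have hMc : Mᶜ ∈ 𝒞.C := hshadow ▸ h4 M x0 hMC hx0M
    have hc1 : (Mᶜ)ᶜ ∈ 𝒞.C := by rw [compl_compl]; exact hMC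
    have hc2 : A ⊆ (Mᶜ)ᶜ := by rw [compl_compl]; exact hAM'
    exact ⟨Mᶜ, ⟨hMc, hc1⟩, Set.singleton_subset_iff.mpr hx0M, hc2⟩
  tfae_finish
end

section
/- If G is an S3-graph, then every interval [u,v] of G is a convex set. -/
namespace PaperS3

variable {V : Type*}

/-- The geodesic interval between `u` and `v`. -/
def interval (G : SimpleGraph V) (u v : V) : Set V :=
  {w | G.dist u w + G.dist w v = G.dist u v}

/-- A set is (geodesically) convex if it contains the interval between any two of its points. -/
def IsConvex (G : SimpleGraph V) (A : Set V) : Prop :=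
  ∀ u ∈ A, ∀ v ∈ A, interval G u v ⊆ A

/-- The convex hull: the smallest convex set containing `A`. -/
def convHull (G : SimpleGraph V) (A : Set V) : Set V :=
  ⋂₀ {C : Set V | IsConvex G C ∧ A ⊆ C}

/-- A halfspace is a convex set with convex complement. -/
def IsHalfspace (G : SimpleGraph V) (H : Set V) : Prop :=
  IsConvex G H ∧ IsConvex G Hᶜ

/-- `A` and `B` are separated by complementary halfspaces. -/
def SepByHalfspaces (G : SimpleGraph V) (A B : Set V) : Prop :=
  ∃ H : Set V, IsHalfspace G H ∧ A ⊆ H ∧ B ⊆ Hᶜ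

/-- `G` is an `S3`-graph: every vertex and convex set not containing it are
separated by complementary halfspaces. -/
def IsS3 (G : SimpleGraph V) : Prop :=
  ∀ (p : V) (A : Set V), IsConvex G A → p ∉ A → SepByHalfspaces G {p} A

/-- The shadow `A/B = {x | conv(B ∪ {x}) ∩ A ≠ ∅}`. -/
def shadow (G : SimpleGraph V) (A B : Set V) : Set V :=
  {x | (convHull G (B ∪ {x}) ∩ A).Nonempty}

/-- A semispace at `x0`: a maximal by inclusion convex set not containing `x0`. -/
def IsSemispaceAt (G : SimpleGraph V) (x0 : V) (S : Set V) : Prop :=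
  IsConvex G S ∧ x0 ∉ S ∧
    ∀ S' : Set V, IsConvex G S' → x0 ∉ S' → S ⊆ S' → S' = S

/-- The vertex `x0` is adjacent to the set `A`. -/
def AdjSet (G : SimpleGraph V) (x0 : V) (A : Set V) : Prop :=
  ∃ a ∈ A, G.Adj x0 a

/-- The imprint of `x0` on `A`. -/
def imprint (G : SimpleGraph V) (x0 : V) (A : Set V) : Set V :=
  {z ∈ A | interval G x0 z ∩ A = {z}}

/-- `K` is an `x0`-proximal set. -/
def IsProximal (G : SimpleGraph V) (x0 : V) (K : Set V) : Prop :=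
  imprint G x0 K = K ∧ x0 ∉ convHull G K

/-- The order `K ⪯_{x0} K'`, i.e. `K ⊆ K'/x0`. -/
def preceq (G : SimpleGraph V) (x0 : V) (K K' : Set V) : Prop :=
  K ⊆ shadow G K' {x0}

/-- `K ∈ Max(Υ_{x0})`: a maximal element of the poset of `x0`-proximal sets. -/
def MaxProximal (G : SimpleGraph V) (x0 : V) (K : Set V) : Prop :=
  IsProximal G x0 K ∧
    ∀ K' : Set V, IsProximal G x0 K' → preceq G x0 K K' → K' = K

/-- `K ∈ Max(Υ*_{x0})`: a maximal element of the poset of `x0`-proximal sets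
adjacent to `x0`. -/
def MaxProximalAdj (G : SimpleGraph V) (x0 : V) (K : Set V) : Prop :=
  (IsProximal G x0 K ∧ AdjSet G x0 K) ∧
    ∀ K' : Set V, IsProximal G x0 K' → AdjSet G x0 K' → preceq G x0 K K' → K' = K

/-- The triangle condition (TC). -/
def TriangleCondition (G : SimpleGraph V) : Prop :=
  ∀ u v w : V, G.Adj v w → G.dist u v = G.dist u w →
    ∃ x : V, G.Adj v x ∧ G.Adj w x ∧ G.dist u x + 1 = G.dist u v

/-- `G` is meshed: the weak quadrangle condition (QC⁻). -/
def Meshed (G : SimpleGraph V) : Prop :=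
  ∀ u v w : V, G.dist v w = 2 →
    ∃ x : V, G.Adj v x ∧ G.Adj w x ∧ 2 * G.dist u x ≤ G.dist u v + G.dist u w

/-- A maximal by inclusion clique. -/
def MaxClique (G : SimpleGraph V) (K : Set V) : Prop :=
  G.IsClique K ∧ ∀ K' : Set V, G.IsClique K' → K ⊆ K' → K' = K

/-- `(x0, K)` is a pointed maximal clique: `K` is a clique, `x0 ∉ K`, and
`K ∪ {x0}` is a maximal clique of `G`. -/
def PointedMaxClique (G : SimpleGraph V) (x0 : V) (K : Set V) : Prop :=
  G.IsClique K ∧ x0 ∉ K ∧ MaxClique G (insert x0 K)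

/-- The set `W_=(K')` of vertices equidistant from all vertices of `K'`. -/
def Weq (G : SimpleGraph V) (K' : Set V) : Set V :=
  {v : V | ∀ y ∈ K', ∀ z ∈ K', G.dist v y = G.dist v z}

/-- The union shadow `x0|K = ⋃_{y ∈ K} x0/y`. -/
def unionShadow (G : SimpleGraph V) (x0 : V) (K : Set V) : Set V :=
  ⋃ y ∈ K, shadow G {x0} {y}

/-- The extended shadow `x0//K = (x0|K) ∪ W_=(K ∪ {x0})`. -/
def extShadow (G : SimpleGraph V) (x0 : V) (K : Set V) : Set V :=
  unionShadow G x0 K ∪ Weq G (insert x0 K)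

/-- A set `A` is gated if every vertex outside `A` has a gate in `A`. -/
def IsGated (G : SimpleGraph V) (A : Set V) : Prop :=
  ∀ x : V, x ∉ A → ∃ x' ∈ A, ∀ y ∈ A, x' ∈ interval G x y

/-- The geodesic convexity of `G` is join-hull commutative. -/
def JHC (G : SimpleGraph V) : Prop :=
  ∀ (A : Set V) (x : V), IsConvex G A →
    convHull G (A ∪ {x}) = ⋃ a ∈ A, interval G x a

end PaperS3

open PaperS3

section Aux

variable {V : Type*} {G : SimpleGraph V}

private lemma exists_nbr (hconn : G.Connected) {w x : V} {c : ℕ}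
    (h : G.dist w x = c + 1) : ∃ y : V, G.Adj y x ∧ G.dist w y = c := by
  obtain ⟨p, hp⟩ := hconn.exists_walk_length_eq_dist w x
  obtain ⟨q, hq⟩ : ∃ q : G.Walk x w, q.length = c + 1 := ⟨p.reverse, by simp [hp, h]⟩
  cases q with
  | nil => simp at hq
  | @cons _ y _ hxy q' =>
    refine ⟨y, hxy.symm, ?_⟩
    have h1 : G.dist w y ≤ c := by
      rw [SimpleGraph.dist_comm]
      exact le_trans (SimpleGraph.dist_le q') (le_of_eq (by simpa using hq))
    have hyx : G.dist y x ≤ 1 := by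
      have := SimpleGraph.dist_le hxy.symm.toWalk
      simpa using this
    have h2 : G.dist w x ≤ G.dist w y + G.dist y x := hconn.dist_triangle
    omega

/-- The key S3-based step: if `w, w' ∈ I(u,v)`, `x ∈ I(w,w')` with `d(w,x) ≤ 1`,
and all strictly shorter intervals are convex, then `x ∈ I(u,v)`. -/
private lemma base_step (hconn : G.Connected) (hS3 : IsS3 G) {u v w w' x : V}
    (IH : ∀ p q : V, G.dist p q < G.dist u v → IsConvex G (interval G p q))
    (hw : w ∈ interval G u v) (hw' : w' ∈ interval G u v)
    (hx : x ∈ interval G w w') (hwx : G.dist w x ≤ 1) : x ∈ interval G u v := by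
  have hw : G.dist u w + G.dist w v = G.dist u v := hw
  have hw' : G.dist u w' + G.dist w' v = G.dist u v := hw'
  have hx : G.dist w x + G.dist x w' = G.dist w w' := hx
  rcases Nat.eq_or_lt_of_le hwx with hwx1 | hwx0
  swap
  · -- d(w,x) = 0, so x = w
    have : w = x := (hconn.dist_eq_zero_iff).mp (by omega)
    subst this; exact hw
  by_cases hwu : w = u
  · have hx2 : G.dist u x + G.dist x w' = G.dist u w' := by rw [← hwu]; exact hx
    have t1 : G.dist x v ≤ G.dist x w' + G.dist w' v := hconn.dist_triangle
    have t2 : G.dist u v ≤ G.dist u x + G.dist x v := hconn.dist_triangle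
    show G.dist u x + G.dist x v = G.dist u v
    omega
  by_cases hwv : w = v
  · have hx2 : G.dist v x + G.dist x w' = G.dist v w' := by rw [← hwv]; exact hx
    have t1 : G.dist u x ≤ G.dist u w' + G.dist w' x := hconn.dist_triangle
    have t2 : G.dist u v ≤ G.dist u x + G.dist x v := hconn.dist_triangle
    have c1 : G.dist w' x = G.dist x w' := SimpleGraph.dist_comm ..
    have c2 : G.dist x v = G.dist v x := SimpleGraph.dist_comm ..
    have c4 : G.dist w' v = G.dist v w' := SimpleGraph.dist_comm ..
    show G.dist u x + G.dist x v = G.dist u v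
    omega
  -- now w ≠ u and w ≠ v
  have ha : 1 ≤ G.dist u w := hconn.pos_dist_of_ne (fun h => hwu h.symm)
  have hb : 1 ≤ G.dist w v := hconn.pos_dist_of_ne hwv
  by_contra hxn
  have hxn : G.dist u x + G.dist x v ≠ G.dist u v := hxn
  have hge : G.dist u v ≤ G.dist u x + G.dist x v := hconn.dist_triangle
  have cwx : G.dist x w = G.dist w x := SimpleGraph.dist_comm ..
  have ta : G.dist u x ≤ G.dist u w + G.dist w x := hconn.dist_triangle
  have tb : G.dist x v ≤ G.dist x w + G.dist w v := hconn.dist_triangle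
  rcases Nat.lt_or_ge (G.dist u w) (G.dist u x) with hA | hB
  · -- case d(u,x) = d(u,w) + 1
    have hA : G.dist u x = G.dist u w + 1 := by omega
    have hAconv : IsConvex G (interval G w v) := IH w v (by omega)
    have hxA : x ∉ interval G w v := by
      intro hmem
      have hmem : G.dist w x + G.dist x v = G.dist w v := hmem
      omega
    obtain ⟨H, ⟨hHconv, hHcconv⟩, hxH, hAHc⟩ := hS3 x (interval G w v) hAconv hxA
    have hxH' : x ∈ H := hxH rfl
    have hwHc : w ∈ Hᶜ := hAHc (show G.dist w w + G.dist w v = G.dist w v by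
      rw [SimpleGraph.dist_self]; omega)
    have hvHc : v ∈ Hᶜ := hAHc (show G.dist w v + G.dist v v = G.dist w v by
      rw [SimpleGraph.dist_self]; omega)
    by_cases huH : u ∈ H
    · have hwI : w ∈ interval G u x :=
        show G.dist u w + G.dist w x = G.dist u x by omega
      exact hwHc (hHconv u huH x hxH' hwI)
    · have hIuv : interval G u v ⊆ Hᶜ := hHcconv u huH v hvHc
      have hIww' : interval G w w' ⊆ Hᶜ := hHcconv w (hIuv hw) w' (hIuv hw')
      exact (hIww' hx) hxH'
  · -- case d(u,x) = d(u,w), d(x,v) = d(w,v) + 1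
    have hB1 : G.dist u x = G.dist u w := by omega
    have hB2 : G.dist x v = G.dist w v + 1 := by omega
    have hAconv : IsConvex G (interval G u w) := IH u w (by omega)
    have hxA : x ∉ interval G u w := by
      intro hmem
      have hmem : G.dist u x + G.dist x w = G.dist u w := hmem
      omega
    obtain ⟨H, ⟨hHconv, hHcconv⟩, hxH, hAHc⟩ := hS3 x (interval G u w) hAconv hxA
    have hxH' : x ∈ H := hxH rfl
    have hwHc : w ∈ Hᶜ := hAHc (show G.dist u w + G.dist w w = G.dist u w by
      rw [SimpleGraph.dist_self]; omega)
    have huHc : u ∈ Hᶜ := hAHc (show G.dist u u + G.dist u w = G.dist u w by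
      rw [SimpleGraph.dist_self]; omega)
    by_cases hvH : v ∈ H
    · have hwI : w ∈ interval G v x := by
        have c1 : G.dist v w = G.dist w v := SimpleGraph.dist_comm ..
        have c2 : G.dist v x = G.dist x v := SimpleGraph.dist_comm ..
        show G.dist v w + G.dist w x = G.dist v x
        omega
      exact hwHc (hHconv v hvH x hxH' hwI)
    · have hIuv : interval G u v ⊆ Hᶜ := hHcconv u huHc v hvH
      have hIww' : interval G w w' ⊆ Hᶜ := hHcconv w (hIuv hw) w' (hIuv hw')
      exact (hIww' hx) hxH'

private lemma inner_step (hconn : G.Connected) (hS3 : IsS3 G) :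
    ∀ (c : ℕ) (u v w w' x : V),
      (∀ p q : V, G.dist p q < G.dist u v → IsConvex G (interval G p q)) →
      w ∈ interval G u v → w' ∈ interval G u v → x ∈ interval G w w' →
      G.dist w x ≤ c → x ∈ interval G u v := by
  intro c
  induction c with
  | zero =>
    intro u v w w' x IH hw hw' hx hc
    have : w = x := (hconn.dist_eq_zero_iff).mp (Nat.le_zero.mp hc)
    subst this; exact hw
  | succ c ih =>
    intro u v w w' x IH hw hw' hx hc
    by_cases h : G.dist w x ≤ c
    · exact ih u v w w' x IH hw hw' hx h
    · have hceq : G.dist w x = c + 1 := by omega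
      rcases Nat.eq_zero_or_pos c with hc0 | hc1
      · exact base_step hconn hS3 IH hw hw' hx (by omega)
      · obtain ⟨y, hyx, hwy⟩ := exists_nbr hconn hceq
        have hdyx : G.dist y x ≤ 1 := by
          have := SimpleGraph.dist_le hyx.toWalk
          simpa using this
        have hx' : G.dist w x + G.dist x w' = G.dist w w' := hx
        have t1 : G.dist w w' ≤ G.dist w y + G.dist y w' := hconn.dist_triangle
        have t2 : G.dist y w' ≤ G.dist y x + G.dist x w' := hconn.dist_triangle
        have hyI : y ∈ interval G w w' :=
          show G.dist w y + G.dist y w' = G.dist w w' by omega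
        have hy_uv : y ∈ interval G u v := ih u v w w' y IH hw hw' hyI (by omega)
        have hxI : x ∈ interval G y w' :=
          show G.dist y x + G.dist x w' = G.dist y w' by omega
        exact base_step hconn hS3 IH hy_uv hw' hxI hdyx

end Aux

/-- In an `S3`-graph, all intervals are convex. -/
theorem stmt2 {V : Type*} [Fintype V] (G : SimpleGraph V) (hconn : G.Connected)
    (hS3 : IsS3 G) (u v : V) : IsConvex G (interval G u v) := by
  suffices h : ∀ (D : ℕ) (u v : V), G.dist u v = D → IsConvex G (interval G u v) by
    exact h (G.dist u v) u v rfl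
  intro D
  induction D using Nat.strong_induction_on with
  | _ D IH =>
    intro u v hD w hw w' hw' x hx
    have IH' : ∀ p q : V, G.dist p q < G.dist u v → IsConvex G (interval G p q) :=
      fun p q h => IH _ (hD ▸ h) p q rfl
    exact inner_step hconn hS3 (G.dist w x) u v w w' x IH' hw hw' hx le_rfl
end

section
/- Let G be a finite connected simple graph. If S is a semispace of G (a semispace at some vertex), then there exists a vertex x0 adjacent to S such that S is a semispace at x0. Consequently, for every convex set A and every vertex x ∉ A there exist a vertex x0 adjacent to A and a semispace S at x0 with A ⊆ S and x ∉ S; hence every convex set is the intersection of semispaces at vertices adjacent to it. -/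
open PaperS3

/-- Pick a neighbor outside `A` on a geodesic from `x` to a closest point of `A`. -/
private lemma stmt3_pick {V : Type*} [Fintype V] (G : SimpleGraph V) (hconn : G.Connected)
    (A : Set V) (hAne : A.Nonempty) (x : V) (hx : x ∉ A) :
    ∃ x0 s : V, s ∈ A ∧ G.Adj x0 s ∧ x0 ∉ A ∧ x0 ∈ interval G x s := by
  obtain ⟨s, hsA, hmin⟩ := A.exists_min_image (fun a => G.dist x a) (Set.toFinite A) hAne
  have hxs : x ≠ s := fun h => hx (h ▸ hsA)
  have hpos : 0 < G.dist x s := hconn.pos_dist_of_ne hxs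
  obtain ⟨p, hp⟩ := (hconn x s).exists_walk_length_eq_dist
  obtain ⟨q, hq⟩ : ∃ q : G.Walk s x, q.length = G.dist x s :=
    ⟨p.reverse, by simpa using hp⟩
  cases q with
  | nil => exact absurd rfl hxs
  | @cons _ b _ h r =>
    refine ⟨b, s, hsA, h.symm, ?_, ?_⟩
    · intro hbA
      have h1 : G.dist x b ≤ r.length := by
        simpa [SimpleGraph.dist_comm] using SimpleGraph.dist_le r
      have h2 : G.dist x s ≤ G.dist x b := hmin b hbA
      simp [SimpleGraph.Walk.length_cons] at hq
      omega
    · have hbs : G.dist b s = 1 := SimpleGraph.dist_eq_one_iff_adj.mpr h.symm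
      have h1 : G.dist x b ≤ r.length := by
        simpa [SimpleGraph.dist_comm] using SimpleGraph.dist_le r
      have h3 : G.dist x s ≤ G.dist x b + G.dist b s := hconn.dist_triangle
      simp [SimpleGraph.Walk.length_cons] at hq
      simp only [interval, Set.mem_setOf_eq, hbs]
      omega

/-- Extend a convex set avoiding `x0` to a semispace at `x0`. -/
private lemma stmt3_extend {V : Type*} [Fintype V] (G : SimpleGraph V)
    (A : Set V) (hA : IsConvex G A) (x0 : V) (hx0 : x0 ∉ A) :
    ∃ S : Set V, IsSemispaceAt G x0 S ∧ A ⊆ S := by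
  obtain ⟨S, hS, hmax⟩ := Set.Finite.exists_maximalFor (id : Set V → Set V)
    {C | IsConvex G C ∧ x0 ∉ C ∧ A ⊆ C} (Set.toFinite _) ⟨A, hA, hx0, subset_rfl⟩
  exact ⟨S, ⟨hS.1, hS.2.1, fun S' hc hn hsub =>
    Set.Subset.antisymm (hmax (j := S') ⟨hc, hn, hS.2.2.trans hsub⟩ hsub) hsub⟩, hS.2.2⟩

/-- Every (nonempty) semispace of `G` is a semispace at a
vertex adjacent to it; consequently, for every nonempty convex set `A` and
every vertex `x ∉ A` there is a semispace at a vertex adjacent to `A`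
containing `A` and missing `x`, and every nonempty convex set is the
intersection of the semispaces at adjacent vertices that contain it. -/
theorem stmt3 {V : Type*} [Fintype V] (G : SimpleGraph V) (hconn : G.Connected) :
    (∀ (S : Set V) (x : V), IsSemispaceAt G x S → S.Nonempty →
      ∃ x0 : V, AdjSet G x0 S ∧ IsSemispaceAt G x0 S) ∧
    (∀ (A : Set V) (x : V), IsConvex G A → A.Nonempty → x ∉ A →
      ∃ (x0 : V) (S : Set V),
        AdjSet G x0 A ∧ IsSemispaceAt G x0 S ∧ A ⊆ S ∧ x ∉ S) ∧
    (∀ A : Set V, IsConvex G A → A.Nonempty →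
      A = ⋂₀ {S : Set V |
        (∃ x0 : V, AdjSet G x0 A ∧ IsSemispaceAt G x0 S) ∧ A ⊆ S}) := by
  have part2 : ∀ (A : Set V) (x : V), IsConvex G A → A.Nonempty → x ∉ A →
      ∃ (x0 : V) (S : Set V),
        AdjSet G x0 A ∧ IsSemispaceAt G x0 S ∧ A ⊆ S ∧ x ∉ S := by
    intro A x hA hAne hx
    obtain ⟨x0, s, hsA, hadj, hx0A, hx0int⟩ := stmt3_pick G hconn A hAne x hx
    obtain ⟨S, hS, hAS⟩ := stmt3_extend G A hA x0 hx0A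
    refine ⟨x0, S, ⟨s, hsA, hadj⟩, hS, hAS, fun hxS => ?_⟩
    exact hS.2.1 (hS.1 x hxS s (hAS hsA) hx0int)
  refine ⟨?_, part2, ?_⟩
  · intro S x hSx hSne
    obtain ⟨x0, s, hsS, hadj, hx0S, hx0int⟩ := stmt3_pick G hconn S hSne x hSx.2.1
    refine ⟨x0, ⟨s, hsS, hadj⟩, hSx.1, hx0S, fun S' hc hn hsub => ?_⟩
    refine hSx.2.2 S' hc (fun hxS' => hn (hc x hxS' s (hsub hsS) hx0int)) hsub
  · intro A hA hAne
    apply Set.Subset.antisymm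
    · exact fun a ha => Set.mem_sInter.mpr fun S hS => hS.2 ha
    · intro x hx
      by_contra hxA
      obtain ⟨x0, S, hadj, hS, hAS, hxS⟩ := part2 A x hA hAne hxA
      exact hxS (Set.mem_sInter.mp hx S ⟨⟨x0, hadj, hS⟩, hAS⟩)
end

section
/- Let G be a finite connected simple graph, x0 a vertex of G, and K ∈ Max(Υ_{x0}) a maximal x0-proximal set. Then: (i) K = Imp_{x0}(conv(K)); (ii) conv(K)/x0 = K/x0; (iii) the vertex set V is the union of the shadows K/x0 and x0/K. -/
open PaperS3

section Aux

variable {V : Type*} (G : SimpleGraph V)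

lemma subset_convHull' (A : Set V) : A ⊆ convHull G A :=
  fun _ ha => Set.mem_sInter.2 fun _ hC => hC.2 ha

lemma convHull_subset' {A C : Set V} (h1 : IsConvex G C) (h2 : A ⊆ C) :
    convHull G A ⊆ C :=
  Set.sInter_subset_of_mem ⟨h1, h2⟩

lemma isConvex_convHull' (A : Set V) : IsConvex G (convHull G A) := by
  intro u hu v hv w hw
  exact Set.mem_sInter.2 fun C hC =>
    hC.1 u (Set.mem_sInter.1 hu C hC) v (Set.mem_sInter.1 hv C hC) hw

lemma right_mem_interval' (x z : V) : z ∈ interval G x z := by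
  simp [interval]

lemma imprint_subset' (x0 : V) (C : Set V) : imprint G x0 C ⊆ C :=
  fun _ hz => hz.1

lemma key' [Fintype V] (hconn : G.Connected) (x0 : V) {C : Set V}
    (hC : IsConvex G C) (z : V) (h : (convHull G ({x0} ∪ {z}) ∩ C).Nonempty) :
    (convHull G ({x0} ∪ {z}) ∩ imprint G x0 C).Nonempty := by
  obtain ⟨w, hw, hmin⟩ := Set.exists_min_image _ (fun u => G.dist x0 u)
      (Set.toFinite _) h
  refine ⟨w, hw.1, hw.2, ?_⟩
  apply Set.eq_singleton_iff_unique_mem.2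
  refine ⟨⟨right_mem_interval' G x0 w, hw.2⟩, ?_⟩
  intro u hu
  have hival : interval G x0 w ⊆ convHull G ({x0} ∪ {z}) :=
    isConvex_convHull' G _ x0 (subset_convHull' G _ (Or.inl rfl)) w hw.1
  have hle := hmin u ⟨hival hu.1, hu.2⟩
  have heq : G.dist x0 u + G.dist u w = G.dist x0 w := hu.1
  have hz0 : G.dist u w = 0 := by omega
  rcases SimpleGraph.dist_eq_zero_iff_eq_or_not_reachable.1 hz0 with h' | h'
  · exact h'
  · exact absurd (hconn.preconnected u w) h'

end Aux

/-- For a maximal `x0`-proximal set `K`: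
(i) `K = Imp_{x0}(conv K)`; (ii) `conv(K)/x0 = K/x0`;
(iii) `V = (K/x0) ∪ (x0/K)`. -/
theorem stmt4 {V : Type*} [Fintype V] (G : SimpleGraph V) (hconn : G.Connected)
    (x0 : V) (K : Set V) (hK : MaxProximal G x0 K) :
    K = imprint G x0 (convHull G K) ∧
    shadow G (convHull G K) {x0} = shadow G K {x0} ∧
    shadow G K {x0} ∪ shadow G {x0} K = Set.univ := by
  obtain ⟨⟨himp, hx0⟩, hmax⟩ := hK
  have main : ∀ B : Set V, K ⊆ B → x0 ∉ convHull G B →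
      imprint G x0 (convHull G B) = K := by
    intro B hKB hx0B
    have hCconv : IsConvex G (convHull G B) := isConvex_convHull' G B
    apply hmax
    · constructor
      · apply Set.Subset.antisymm (imprint_subset' G x0 _)
        intro w hw
        refine ⟨hw, ?_⟩
        apply Set.eq_singleton_iff_unique_mem.2
        refine ⟨⟨right_mem_interval' G x0 w, hw⟩, ?_⟩
        intro u hu
        have hmem : u ∈ interval G x0 w ∩ convHull G B :=
          ⟨hu.1, imprint_subset' G x0 _ hu.2⟩
        rw [hw.2] at hmem
        exact hmem
      · intro hx
        exact hx0B (convHull_subset' G hCconv (imprint_subset' G x0 _) hx)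
    · intro zv hz
      exact key' G hconn x0 hCconv zv
        ⟨zv, subset_convHull' G _ (Or.inr rfl), subset_convHull' G B (hKB hz)⟩
  have h1 : K = imprint G x0 (convHull G K) := (main K subset_rfl hx0).symm
  refine ⟨h1, ?_, ?_⟩
  · ext x
    constructor
    · intro hx
      have h2 := key' G hconn x0 (isConvex_convHull' G K) x hx
      rw [← h1] at h2
      exact h2
    · rintro ⟨w, hw1, hw2⟩
      exact ⟨w, hw1, subset_convHull' G K hw2⟩
  · apply Set.eq_univ_of_forall
    intro x
    by_cases hx : x0 ∈ convHull G (K ∪ {x})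
    · exact Or.inr ⟨x0, hx, rfl⟩
    · left
      have hm := main (K ∪ {x}) Set.subset_union_left hx
      have h2 := key' G hconn x0 (isConvex_convHull' G (K ∪ {x})) x
        ⟨x, subset_convHull' G _ (Or.inr rfl), subset_convHull' G _ (Or.inr rfl)⟩
      rw [hm] at h2
      exact h2
end

section
/- Let G be a finite connected simple S3-graph and x0 a vertex of G. If S is a semispace at x0, then Imp_{x0}(S) ∈ Max(Υ_{x0}) and S = Imp_{x0}(S)/x0. Conversely, if K ∈ Max(Υ_{x0}), then the shadow K/x0 is a semispace at x0. -/
open PaperS3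

namespace Stmt5Aux

open PaperS3

variable {V : Type*} [Fintype V] {G : SimpleGraph V}

lemma mem_iv {u v w : V} : w ∈ interval G u v ↔ G.dist u w + G.dist w v = G.dist u v :=
  Iff.rfl

lemma left_mem_iv {u v : V} : u ∈ interval G u v := by
  show G.dist u u + G.dist u v = G.dist u v
  rw [SimpleGraph.dist_self, Nat.zero_add]

lemma right_mem_iv {u v : V} : v ∈ interval G u v := by
  show G.dist u v + G.dist v v = G.dist u v
  rw [SimpleGraph.dist_self, Nat.add_zero]

lemma iv_symm {u v w : V} (h : w ∈ interval G u v) : w ∈ interval G v u := by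
  have h1 : G.dist v w = G.dist w v := SimpleGraph.dist_comm
  have h2 : G.dist w u = G.dist u w := SimpleGraph.dist_comm
  have h3 : G.dist v u = G.dist u v := SimpleGraph.dist_comm
  have h4 : G.dist u w + G.dist w v = G.dist u v := h
  show G.dist v w + G.dist w u = G.dist v u
  omega

lemma iv_trans (hconn : G.Connected) {u v b : V} (hb : b ∈ interval G u v) :
    interval G u b ⊆ interval G u v := by
  intro w hw
  have hw' : G.dist u w + G.dist w b = G.dist u b := hw
  have hb' : G.dist u b + G.dist b v = G.dist u v := hb
  have t1 : G.dist u v ≤ G.dist u w + G.dist w v := hconn.dist_triangle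
  have t2 : G.dist w v ≤ G.dist w b + G.dist b v := hconn.dist_triangle
  show G.dist u w + G.dist w v = G.dist u v
  omega

lemma iv_trans' (hconn : G.Connected) {u v w z : V} (hw : w ∈ interval G u z)
    (hz : z ∈ interval G u v) : z ∈ interval G w v := by
  have hw' : G.dist u w + G.dist w z = G.dist u z := hw
  have hz' : G.dist u z + G.dist z v = G.dist u v := hz
  have t1 : G.dist u v ≤ G.dist u w + G.dist w v := hconn.dist_triangle
  have t2 : G.dist w v ≤ G.dist w z + G.dist z v := hconn.dist_triangle
  show G.dist w z + G.dist z v = G.dist w v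
  omega

lemma iv_right_trans (hconn : G.Connected) {u v b : V} (hb : b ∈ interval G u v) :
    interval G b v ⊆ interval G u v := fun w hw =>
  iv_symm (iv_trans hconn (iv_symm hb) (iv_symm hw))

lemma eq_of_mem_mem (hconn : G.Connected) {u w z : V} (h1 : w ∈ interval G u z)
    (h2 : z ∈ interval G u w) : w = z := by
  have h1' : G.dist u w + G.dist w z = G.dist u z := h1
  have h2' : G.dist u z + G.dist z w = G.dist u w := h2
  have h3 : G.dist z w = G.dist w z := SimpleGraph.dist_comm
  have h0 : G.dist w z = 0 := by omega
  exact hconn.dist_eq_zero_iff.mp h0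

lemma convHull_isConvex (A : Set V) : IsConvex G (convHull G A) := by
  intro a ha b hb w hw
  refine Set.mem_sInter.2 fun C hC =>
    hC.1 a (Set.mem_sInter.1 ha C hC) b (Set.mem_sInter.1 hb C hC) hw

lemma subset_convHull {A : Set V} : A ⊆ convHull G A := fun a ha =>
  Set.mem_sInter.2 fun _C hC => hC.2 ha

lemma convHull_min {A C : Set V} (hC : IsConvex G C) (hAC : A ⊆ C) :
    convHull G A ⊆ C := fun a ha => Set.mem_sInter.1 ha C ⟨hC, hAC⟩

/-- In a connected S3-graph, every geodesic interval is convex. -/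
theorem interval_isConvex (hconn : G.Connected) (hS3 : IsS3 G) :
    ∀ u v : V, IsConvex G (interval G u v) := by
  classical
  have main : ∀ n : ℕ, ∀ u v : V, G.dist u v = n → IsConvex G (interval G u v) := by
    intro n
    induction n using Nat.strong_induction_on with
    | _ n IH =>
      intro u v hn
      have key : ∀ m : ℕ, ∀ a b c : V, a ∈ interval G u v → b ∈ interval G u v →
          c ∈ interval G a b → c ∉ interval G u v → G.dist a c = m → False := by
        intro m
        induction m using Nat.strong_induction_on with
        | _ m IHm =>
          intro a b c ha hb hc hcn hm
          rcases Nat.eq_zero_or_pos m with hm0 | hmpos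
          · subst hm0
            have : a = c := hconn.dist_eq_zero_iff.mp hm
            exact hcn (this ▸ ha)
          rcases eq_or_lt_of_le (Nat.succ_le_of_lt hmpos) with hm1 | hm2
          · -- main case : G.dist a c = 1
            have hac : G.dist a c = 1 := by omega
            have hca : G.dist c a = 1 := by rw [SimpleGraph.dist_comm]; exact hac
            have hau : a ≠ u := by
              rintro rfl
              exact hcn (iv_trans hconn hb hc)
            have hav : a ≠ v := by
              rintro rfl
              exact hcn (iv_right_trans hconn hb (iv_symm hc))
            have hd1 : 0 < G.dist u a := hconn.pos_dist_of_ne (Ne.symm hau)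
            have hd2 : 0 < G.dist a v := hconn.pos_dist_of_ne hav
            have t1 : G.dist u c ≤ G.dist u a + G.dist a c := hconn.dist_triangle
            have t2 : G.dist u a ≤ G.dist u c + G.dist c a := hconn.dist_triangle
            have t3 : G.dist c v ≤ G.dist c a + G.dist a v := hconn.dist_triangle
            have t5 : G.dist u v ≤ G.dist u c + G.dist c v := hconn.dist_triangle
            have hsum : G.dist u c + G.dist c v ≠ G.dist u v := fun h => hcn h
            have hae : G.dist u a + G.dist a v = G.dist u v := ha
            by_cases hUC : G.dist u c = G.dist u a + 1
            · -- a lies on a geodesic from u to c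
              have haUC : a ∈ interval G u c := by
                show G.dist u a + G.dist a c = G.dist u c
                omega
              have hlt : G.dist a v < n := by omega
              have hAVconv : IsConvex G (interval G a v) := IH (G.dist a v) hlt a v rfl
              have hcAV : c ∉ interval G a v := fun hmem =>
                hcn (iv_right_trans hconn ha hmem)
              obtain ⟨H, ⟨hHconv, hHCconv⟩, hcH, hAvH⟩ := hS3 c (interval G a v) hAVconv hcAV
              have hcH' : c ∈ H := hcH rfl
              have haHc : a ∈ Hᶜ := hAvH left_mem_iv
              have hvHc : v ∈ Hᶜ := hAvH right_mem_iv
              have hbH : b ∈ H := by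
                by_contra hbH
                exact ((Set.mem_compl_iff _ _).mp
                  (hHCconv a haHc b ((Set.mem_compl_iff _ _).mpr hbH) hc)) hcH'
              have huH : u ∈ H := by
                by_contra huH
                exact ((Set.mem_compl_iff _ _).mp
                  (hHCconv u ((Set.mem_compl_iff _ _).mpr huH) v hvHc hb)) hbH
              exact ((Set.mem_compl_iff _ _).mp haHc) (hHconv u huH c hcH' haUC)
            · -- then a lies on a geodesic from c to v
              have haCV : a ∈ interval G c v := by
                show G.dist c a + G.dist a v = G.dist c v
                omega
              have hlt : G.dist u a < n := by omega
              have hUAconv : IsConvex G (interval G u a) := IH (G.dist u a) hlt u a rfl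
              have hcUA : c ∉ interval G u a := fun hmem => hcn (iv_trans hconn ha hmem)
              obtain ⟨H, ⟨hHconv, hHCconv⟩, hcH, hUaH⟩ := hS3 c (interval G u a) hUAconv hcUA
              have hcH' : c ∈ H := hcH rfl
              have haHc : a ∈ Hᶜ := hUaH right_mem_iv
              have huHc : u ∈ Hᶜ := hUaH left_mem_iv
              have hbH : b ∈ H := by
                by_contra hbH
                exact ((Set.mem_compl_iff _ _).mp
                  (hHCconv a haHc b ((Set.mem_compl_iff _ _).mpr hbH) hc)) hcH'
              have hvH : v ∈ H := by
                by_contra hvH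
                exact ((Set.mem_compl_iff _ _).mp
                  (hHCconv u huHc v ((Set.mem_compl_iff _ _).mpr hvH) hb)) hbH
              exact ((Set.mem_compl_iff _ _).mp haHc) (hHconv c hcH' v hvH haCV)
          · -- m ≥ 2 : step closer to a
            have hne0 : G.dist a c ≠ 0 := by omega
            obtain ⟨p, hp⟩ := (hconn a c).exists_walk_length_eq_dist
            cases p with
            | nil =>
              simp only [SimpleGraph.Walk.length_nil] at hp
              omega
            | cons hadj q =>
              rename_i c1
              have hd1 : G.dist a c1 = 1 := SimpleGraph.dist_eq_one_iff_adj.mpr hadj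
              have hd2 : G.dist c1 c ≤ q.length := SimpleGraph.dist_le q
              have hd3 : q.length + 1 = G.dist a c := by
                simpa [SimpleGraph.Walk.length_cons] using hp
              have t4 : G.dist a c ≤ G.dist a c1 + G.dist c1 c := hconn.dist_triangle
              have hc1ac : c1 ∈ interval G a c := by
                show G.dist a c1 + G.dist c1 c = G.dist a c
                omega
              have hc1ab : c1 ∈ interval G a b := iv_trans hconn hc hc1ac
              have hcc1b : c ∈ interval G c1 b := iv_trans' hconn hc1ac hc
              by_cases hc1uv : c1 ∈ interval G u v
              · exact IHm (G.dist c1 c) (by omega) c1 b c hc1uv hb hcc1b hcn rfl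
              · exact IHm 1 (by omega) a b c1 ha hb hc1ab hc1uv hd1
      intro a ha b hb c hc
      by_contra hcn
      exact key (G.dist a c) a b c ha hb hc hcn rfl
  intro u v
  exact main (G.dist u v) u v rfl

lemma convHull_pair (hconn : G.Connected) (hS3 : IsS3 G) (x0 x : V) :
    convHull G ({x0} ∪ {x}) = interval G x0 x := by
  apply Set.Subset.antisymm
  · refine convHull_min (interval_isConvex hconn hS3 x0 x) ?_
    intro y hy
    rcases hy with hy | hy
    · rw [Set.mem_singleton_iff] at hy; subst hy; exact left_mem_iv
    · rw [Set.mem_singleton_iff] at hy; subst hy; exact right_mem_iv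
  · intro w hw
    refine Set.mem_sInter.2 fun C hC =>
      hC.1 x0 (hC.2 (Set.mem_union_left _ rfl)) x (hC.2 (Set.mem_union_right _ rfl)) hw

lemma mem_shadow (hconn : G.Connected) (hS3 : IsS3 G) {x0 x : V} {K : Set V} :
    x ∈ shadow G K {x0} ↔ ∃ y, y ∈ interval G x0 x ∧ y ∈ K := by
  show (convHull G ({x0} ∪ {x}) ∩ K).Nonempty ↔ _
  rw [convHull_pair hconn hS3]
  exact ⟨fun ⟨y, hy⟩ => ⟨y, hy.1, hy.2⟩, fun ⟨y, h1, h2⟩ => ⟨y, h1, h2⟩⟩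

lemma semispace_compl (hS3 : IsS3 G) {x0 : V} {S : Set V} (hS : IsSemispaceAt G x0 S) :
    IsConvex G Sᶜ := by
  obtain ⟨H, ⟨hH, hHc⟩, hx0H, hSH⟩ := hS3 x0 S hS.1 hS.2.1
  have hx0 : x0 ∉ Hᶜ := fun h => ((Set.mem_compl_iff _ _).mp h) (hx0H rfl)
  have hHS : Hᶜ = S := hS.2.2 Hᶜ hHc hx0 hSH
  rw [← hHS, compl_compl]
  exact hH

lemma exists_semispace {x0 : V} {C : Set V} (hC : IsConvex G C) (hx : x0 ∉ C) :
    ∃ S : Set V, IsSemispaceAt G x0 S ∧ C ⊆ S := by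
  classical
  have hfin : ({T : Set V | IsConvex G T ∧ x0 ∉ T ∧ C ⊆ T}).Finite := Set.toFinite _
  have hne : ({T : Set V | IsConvex G T ∧ x0 ∉ T ∧ C ⊆ T}).Nonempty :=
    ⟨C, hC, hx, subset_rfl⟩
  obtain ⟨S, hS, hmax⟩ := Set.Finite.exists_maximalFor id _ hfin hne
  refine ⟨S, ⟨hS.1, hS.2.1, ?_⟩, hS.2.2⟩
  intro S' hS'c hS'x hSS'
  exact Set.Subset.antisymm (hmax ⟨hS'c, hS'x, hS.2.2.trans hSS'⟩ hSS') hSS'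

lemma imprint_sub {x0 : V} {A : Set V} : imprint G x0 A ⊆ A := fun _z hz => hz.1

lemma imprint_imprint {x0 : V} {A : Set V} :
    imprint G x0 (imprint G x0 A) = imprint G x0 A := by
  apply Set.Subset.antisymm imprint_sub
  intro z hz
  refine ⟨hz, Set.Subset.antisymm ?_ ?_⟩
  · intro w hw
    have hmem : w ∈ interval G x0 z ∩ A := ⟨hw.1, hw.2.1⟩
    rw [hz.2] at hmem
    exact hmem
  · intro w hw
    rw [Set.mem_singleton_iff] at hw; subst hw
    exact ⟨right_mem_iv, hz⟩

lemma proximal_imprint {x0 : V} {S : Set V} (hS : IsSemispaceAt G x0 S) :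
    IsProximal G x0 (imprint G x0 S) :=
  ⟨imprint_imprint, fun hmem => hS.2.1 (convHull_min hS.1 imprint_sub hmem)⟩

lemma exists_imprint_pt (hconn : G.Connected) {x0 x : V} {S : Set V} (hx : x ∈ S) :
    ∃ z, z ∈ imprint G x0 S ∧ z ∈ interval G x0 x := by
  classical
  have hne : (interval G x0 x ∩ S).Nonempty := ⟨x, right_mem_iv, hx⟩
  obtain ⟨z, hzmem, hmin⟩ :=
    Set.exists_min_image (interval G x0 x ∩ S) (fun w => G.dist x0 w) (Set.toFinite _) hne
  obtain ⟨hzI, hzS⟩ := hzmem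
  refine ⟨z, ⟨hzS, Set.Subset.antisymm ?_ ?_⟩, hzI⟩
  · intro w hw
    have hwx : w ∈ interval G x0 x := iv_trans hconn hzI hw.1
    have hge : G.dist x0 z ≤ G.dist x0 w := hmin w ⟨hwx, hw.2⟩
    have heq : G.dist x0 w + G.dist w z = G.dist x0 z := hw.1
    have h0 : G.dist w z = 0 := by omega
    exact Set.mem_singleton_iff.mpr (hconn.dist_eq_zero_iff.mp h0)
  · intro w hw
    rw [Set.mem_singleton_iff] at hw; subst hw
    exact ⟨right_mem_iv, hzS⟩

lemma shadow_sub_semispace (hconn : G.Connected) (hS3 : IsS3 G) {x0 : V} {S K : Set V}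
    (hS : IsSemispaceAt G x0 S) (hK : K ⊆ S) : shadow G K {x0} ⊆ S := by
  intro x hxs
  obtain ⟨y, hyI, hyK⟩ := (mem_shadow hconn hS3).mp hxs
  by_contra hx
  have hcompl := semispace_compl hS3 hS
  have hsub : interval G x0 x ⊆ Sᶜ :=
    hcompl x0 ((Set.mem_compl_iff _ _).mpr hS.2.1) x ((Set.mem_compl_iff _ _).mpr hx)
  exact ((Set.mem_compl_iff _ _).mp (hsub hyI)) (hK hyK)

lemma shadow_imprint (hconn : G.Connected) (hS3 : IsS3 G) {x0 : V} {S : Set V}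
    (hS : IsSemispaceAt G x0 S) : S = shadow G (imprint G x0 S) {x0} := by
  apply Set.Subset.antisymm
  · intro x hx
    obtain ⟨z, hzImp, hzI⟩ := exists_imprint_pt hconn hx
    exact (mem_shadow hconn hS3).mpr ⟨z, hzI, hzImp⟩
  · exact shadow_sub_semispace hconn hS3 hS imprint_sub

lemma imprint_max (hconn : G.Connected) (hS3 : IsS3 G) {x0 : V} {S : Set V}
    (hS : IsSemispaceAt G x0 S) :
    ∀ K' : Set V, IsProximal G x0 K' → preceq G x0 (imprint G x0 S) K' →
      K' = imprint G x0 S := by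
  intro K' hK' hpre
  have stepi : ∀ x ∈ S, ∃ y, y ∈ interval G x0 x ∧ y ∈ K' := by
    intro x hx
    obtain ⟨z, hzImp, hzI⟩ := exists_imprint_pt hconn hx
    obtain ⟨y, hyI, hyK⟩ := (mem_shadow hconn hS3).mp (hpre hzImp)
    exact ⟨y, iv_trans hconn hzI hyI, hyK⟩
  obtain ⟨S', hS', hCS'⟩ := exists_semispace (convHull_isConvex K') hK'.2
  have hK'S' : K' ⊆ S' := subset_convHull.trans hCS'
  have hshadS' : shadow G K' {x0} ⊆ S' := shadow_sub_semispace hconn hS3 hS' hK'S'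
  have hSsubS' : S ⊆ S' := fun x hx => hshadS' ((mem_shadow hconn hS3).mpr (stepi x hx))
  have hS'S : S' = S := hS.2.2 S' hS'.1 hS'.2.1 hSsubS'
  have hK'S : K' ⊆ S := hS'S ▸ hK'S'
  have hsub1 : K' ⊆ imprint G x0 S := by
    intro z hz
    refine ⟨hK'S hz, Set.Subset.antisymm ?_ ?_⟩
    · intro w hw
      obtain ⟨y, hyI, hyK⟩ := stepi w hw.2
      have hyz : y ∈ interval G x0 z := iv_trans hconn hw.1 hyI
      have hz' : z ∈ imprint G x0 K' := hK'.1.symm ▸ hz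
      have hy_eq : y = z := by
        have hmem : y ∈ interval G x0 z ∩ K' := ⟨hyz, hyK⟩
        rw [hz'.2] at hmem
        exact hmem
      have hwz : w = z := eq_of_mem_mem hconn hw.1 (hy_eq ▸ hyI)
      exact Set.mem_singleton_iff.mpr hwz
    · intro w hw
      rw [Set.mem_singleton_iff] at hw; subst hw
      exact ⟨right_mem_iv, hK'S hz⟩
  have hsub2 : imprint G x0 S ⊆ K' := by
    intro z hzImp
    obtain ⟨y, hyI, hyK⟩ := stepi z (imprint_sub hzImp)
    have hmem : y ∈ interval G x0 z ∩ S := ⟨hyI, hK'S hyK⟩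
    rw [hzImp.2] at hmem
    rw [Set.mem_singleton_iff] at hmem
    exact hmem ▸ hyK
  exact Set.Subset.antisymm hsub1 hsub2

lemma maxprox_shadow (hconn : G.Connected) (hS3 : IsS3 G) {x0 : V} {K : Set V}
    (hK : MaxProximal G x0 K) : IsSemispaceAt G x0 (shadow G K {x0}) := by
  obtain ⟨S, hS, hCS⟩ := exists_semispace (convHull_isConvex K) hK.1.2
  have hKS : K ⊆ S := subset_convHull.trans hCS
  have himp : imprint G x0 S = K := by
    apply hK.2
    · exact proximal_imprint hS
    · show K ⊆ shadow G (imprint G x0 S) {x0}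
      rw [← shadow_imprint hconn hS3 hS]
      exact hKS
  have hshad : shadow G K {x0} = S := by
    rw [← himp, ← shadow_imprint hconn hS3 hS]
  rw [hshad]
  exact hS

end Stmt5Aux


/-- In an `S3`-graph, the semispaces at `x0` are exactly the
shadows `K/x0` of the maximal `x0`-proximal sets `K`: if `S` is a semispace at
`x0` then `Imp_{x0}(S) ∈ Max(Υ_{x0})` and `S = Imp_{x0}(S)/x0`; conversely,
for any `K ∈ Max(Υ_{x0})` the shadow `K/x0` is a semispace at `x0`. -/
theorem stmt5 {V : Type*} [Fintype V] (G : SimpleGraph V) (hconn : G.Connected)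
    (hS3 : IsS3 G) (x0 : V) :
    (∀ S : Set V, IsSemispaceAt G x0 S →
      MaxProximal G x0 (imprint G x0 S) ∧ S = shadow G (imprint G x0 S) {x0}) ∧
    (∀ K : Set V, MaxProximal G x0 K → IsSemispaceAt G x0 (shadow G K {x0})) := by
  constructor
  · intro S hS
    exact ⟨⟨Stmt5Aux.proximal_imprint hS, Stmt5Aux.imprint_max hconn hS3 hS⟩,
      Stmt5Aux.shadow_imprint hconn hS3 hS⟩
  · intro K hK
    exact Stmt5Aux.maxprox_shadow hconn hS3 hK
end

section
/- Let G be a finite connected simple S3-graph, x0 a vertex of G, and K ⊆ V. Then K ∈ Max(Υ_{x0}) if and only if K is a maximal by inclusion member of Υ_{x0} (a facet of the simplicial complex Υ_{x0}) satisfying condition (P3): for every vertex y ∈ V∖K such that the set R := (y/x0) ∩ K is nonempty, one has x0 ∈ conv((K∖R) ∪ {y}). -/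
open PaperS3

namespace Stmt7Aux

variable {V : Type*} {G : SimpleGraph V}

lemma mem_interval {u v w : V} : w ∈ interval G u v ↔ G.dist u w + G.dist w v = G.dist u v :=
  Iff.rfl

lemma left_mem_interval (G : SimpleGraph V) (u v : V) : u ∈ interval G u v := by
  simp [interval, SimpleGraph.dist_self]

lemma right_mem_interval (G : SimpleGraph V) (u v : V) : v ∈ interval G u v := by
  simp [interval, SimpleGraph.dist_self]

lemma interval_comm {u v : V} : interval G u v = interval G v u := by
  ext w
  simp only [mem_interval]
  rw [SimpleGraph.dist_comm (u := u) (v := w), SimpleGraph.dist_comm (u := w) (v := v),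
    SimpleGraph.dist_comm (u := u) (v := v)]
  omega

lemma interval_subset_left (hconn : G.Connected) {u v a : V} (ha : a ∈ interval G u v) :
    interval G u a ⊆ interval G u v := by
  intro w hw
  rw [mem_interval] at *
  have h1 : G.dist w v ≤ G.dist w a + G.dist a v := hconn.dist_triangle
  have h2 : G.dist u v ≤ G.dist u w + G.dist w v := hconn.dist_triangle
  omega

lemma interval_subset_right (hconn : G.Connected) {u v a : V} (ha : a ∈ interval G u v) :
    interval G a v ⊆ interval G u v := by
  rw [interval_comm (u := u)] at ha ⊢
  rw [interval_comm]
  exact interval_subset_left hconn ha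

lemma exists_step (hconn : G.Connected) {a z : V} {m : ℕ} (h : G.dist a z = m + 1) :
    ∃ a', G.dist a a' = 1 ∧ G.dist a' z = m := by
  obtain ⟨p, hp⟩ := hconn.exists_walk_length_eq_dist a z
  cases p with
  | nil =>
    rw [SimpleGraph.Walk.length_nil] at hp
    rw [SimpleGraph.dist_self] at h
    omega
  | cons hadj q =>
    rename_i b
    refine ⟨b, SimpleGraph.dist_eq_one_iff_adj.mpr hadj, ?_⟩
    rw [SimpleGraph.Walk.length_cons] at hp
    have h1 : G.dist b z ≤ q.length := SimpleGraph.dist_le q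
    have h2 : G.dist a z ≤ G.dist a b + G.dist b z := hconn.dist_triangle
    have h3 : G.dist a b ≤ 1 := by
      rw [SimpleGraph.dist_eq_one_iff_adj.mpr hadj]
    omega

/-- Core S3 argument. -/
lemma core (hconn : G.Connected) (hS3 : IsS3 G) {u v a b z : V}
    (ha : a ∈ interval G u v) (hb : b ∈ interval G u v) (hz : z ∈ interval G a b)
    (hd : G.dist a z = 1) (hzout : z ∉ interval G u v)
    (hua : IsConvex G (interval G u a)) (hav : IsConvex G (interval G a v)) : False := by
  have hzav : z ∉ interval G a v := fun h => hzout (interval_subset_right hconn ha h)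
  have hzua : z ∉ interval G u a := fun h => hzout (interval_subset_left hconn ha h)
  obtain ⟨H1, ⟨hH1, hH1c⟩, hzH1, hav1⟩ := hS3 z (interval G a v) hav hzav
  have hz1 : z ∈ H1 := hzH1 rfl
  have ha1 : a ∈ H1ᶜ := hav1 (left_mem_interval G a v)
  have hv1 : v ∈ H1ᶜ := hav1 (right_mem_interval G a v)
  have hb1 : b ∈ H1 := by
    by_contra hb1
    exact (hH1c a ha1 b hb1 hz) hz1
  have hu1 : u ∈ H1 := by
    by_contra hu1
    exact (hH1c u hu1 v hv1 hb) hb1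
  have hauz : a ∉ interval G u z := fun h => ha1 (hH1 u hu1 z hz1 h)
  have key1 : G.dist u z ≤ G.dist u a := by
    have h1 : G.dist u z ≤ G.dist u a + G.dist a z := hconn.dist_triangle
    have h2 : G.dist u a + G.dist a z ≠ G.dist u z := fun h => hauz h
    omega
  obtain ⟨H3, ⟨hH3, hH3c⟩, hzH3, hua3⟩ := hS3 z (interval G u a) hua hzua
  have hz3 : z ∈ H3 := hzH3 rfl
  have hu3 : u ∈ H3ᶜ := hua3 (left_mem_interval G u a)
  have ha3 : a ∈ H3ᶜ := hua3 (right_mem_interval G u a)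
  have hb3 : b ∈ H3 := by
    by_contra hb3
    exact (hH3c a ha3 b hb3 hz) hz3
  have hv3 : v ∈ H3 := by
    by_contra hv3
    exact (hH3c u hu3 v hv3 hb) hb3
  have hazv : a ∉ interval G z v := fun h => ha3 (hH3 z hz3 v hv3 h)
  have key2 : G.dist z v ≤ G.dist a v := by
    have h1 : G.dist z v ≤ G.dist z a + G.dist a v := hconn.dist_triangle
    have h2 : G.dist z a + G.dist a v ≠ G.dist z v := fun h => hazv h
    have h3 : G.dist z a = G.dist a z := SimpleGraph.dist_comm
    omega
  have htri : G.dist u v ≤ G.dist u z + G.dist z v := hconn.dist_triangle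
  rw [mem_interval] at ha hzout
  omega

theorem interval_isConvex (hconn : G.Connected) (hS3 : IsS3 G) (u v : V) :
    IsConvex G (interval G u v) := by
  suffices h : ∀ n : ℕ, ∀ u v : V, G.dist u v ≤ n → IsConvex G (interval G u v) from
    h (G.dist u v) u v le_rfl
  intro n
  induction n with
  | zero =>
    intro u v huv
    have huv' : u = v := hconn.dist_eq_zero_iff.mp (by omega)
    subst huv'
    have hiv : interval G u u = {u} := by
      ext w
      simp only [mem_interval, Set.mem_singleton_iff, SimpleGraph.dist_self]
      constructor
      · intro h
        have h1 : G.dist u w = 0 := by omega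
        exact (hconn.dist_eq_zero_iff.mp h1).symm
      · intro h; subst h; simp [SimpleGraph.dist_self]
    rw [hiv]
    intro p hp q hq
    rw [Set.mem_singleton_iff] at hp hq
    subst hp; subst hq
    rw [hiv]
  | succ n ih =>
    intro u v huv
    rcases Nat.lt_or_ge (G.dist u v) (n + 1) with hlt | hge
    · exact ih u v (by omega)
    have hn : G.dist u v = n + 1 := le_antisymm huv hge
    intro a ha b hb
    suffices hinner : ∀ m : ℕ, ∀ a b z : V, a ∈ interval G u v → b ∈ interval G u v →
        z ∈ interval G a b → G.dist a z ≤ m → z ∈ interval G u v by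
      intro z hz
      exact hinner (G.dist a z) a b z ha hb hz le_rfl
    clear ha hb
    clear a b
    intro m
    induction m with
    | zero =>
      intro a b z ha hb hz hdz
      have : a = z := hconn.dist_eq_zero_iff.mp (by omega)
      exact this ▸ ha
    | succ m ihm =>
      intro a b z ha hb hz hdz
      by_contra hzout
      rcases Nat.lt_or_ge (G.dist a z) (m + 1) with hlt | hge2
      · exact hzout (ihm a b z ha hb hz (by omega))
      have hdaz : G.dist a z = m + 1 := le_antisymm hdz hge2
      obtain ⟨a', haa', ha'z⟩ := exists_step hconn hdaz
      have ha'az : a' ∈ interval G a z := by rw [mem_interval]; omega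
      have ha'ab : a' ∈ interval G a b := interval_subset_left hconn hz ha'az
      by_cases ha'uv : a' ∈ interval G u v
      · have h1 : z ∈ interval G a' b := by
          rw [mem_interval] at hz ha'ab ha'az ⊢
          have htri : G.dist a' b ≤ G.dist a' z + G.dist z b := hconn.dist_triangle
          omega
        exact hzout (ihm a' b z ha'uv hb h1 (by omega))
      · have hau : a ≠ u := by
          rintro rfl
          exact ha'uv (interval_subset_left hconn hb ha'ab)
        have hav : a ≠ v := by
          rintro rfl
          apply ha'uv
          rw [interval_comm] at ha'ab
          exact interval_subset_right hconn hb ha'ab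
        have hdua : G.dist u a ≤ n := by
          rw [mem_interval] at ha
          have hpos : 0 < G.dist a v := hconn.pos_dist_of_ne hav
          omega
        have hdav : G.dist a v ≤ n := by
          rw [mem_interval] at ha
          have hpos : 0 < G.dist u a := hconn.pos_dist_of_ne hau.symm
          omega
        exact core hconn hS3 ha hb ha'ab haa' ha'uv (ih u a hdua) (ih a v hdav)

lemma subset_convHull (G : SimpleGraph V) (A : Set V) : A ⊆ convHull G A := by
  intro x hx
  rw [convHull, Set.mem_sInter]
  intro C hC
  exact hC.2 hx

lemma convHull_min {A C : Set V} (hC : IsConvex G C) (hAC : A ⊆ C) : convHull G A ⊆ C :=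
  fun _ hx => (Set.mem_sInter.mp hx) C ⟨hC, hAC⟩

lemma convHull_mono (G : SimpleGraph V) {A B : Set V} (h : A ⊆ B) :
    convHull G A ⊆ convHull G B := by
  intro x hx
  rw [convHull, Set.mem_sInter]
  intro C hC
  exact (Set.mem_sInter.mp hx) C ⟨hC.1, h.trans hC.2⟩

lemma isConvex_convHull (G : SimpleGraph V) (A : Set V) : IsConvex G (convHull G A) := by
  intro p hp q hq w hw
  rw [convHull, Set.mem_sInter]
  intro C hC
  exact hC.1 p (Set.mem_sInter.mp hp C hC) q (Set.mem_sInter.mp hq C hC) hw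

lemma convHull_pair (hconn : G.Connected) (hS3 : IsS3 G) (x y : V) :
    convHull G ({x} ∪ {y}) = interval G x y := by
  apply Set.Subset.antisymm
  · apply convHull_min (interval_isConvex hconn hS3 x y)
    rintro w (hw | hw) <;> rw [Set.mem_singleton_iff] at hw
    · rw [hw]; exact left_mem_interval G x y
    · rw [hw]; exact right_mem_interval G x y
  · intro w hw
    rw [convHull, Set.mem_sInter]
    rintro C ⟨hCc, hCs⟩
    exact hCc x (hCs (Or.inl rfl)) y (hCs (Or.inr rfl)) hw

lemma mem_shadow_iff (hconn : G.Connected) (hS3 : IsS3 G) {A : Set V} {x0 x : V} :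
    x ∈ shadow G A {x0} ↔ (interval G x0 x ∩ A).Nonempty := by
  rw [shadow, Set.mem_setOf_eq, convHull_pair hconn hS3]

lemma mem_shadow_single (hconn : G.Connected) (hS3 : IsS3 G) {y x0 x : V} :
    x ∈ shadow G {y} {x0} ↔ y ∈ interval G x0 x := by
  rw [mem_shadow_iff hconn hS3]
  constructor
  · rintro ⟨w, hw1, hw2⟩
    rw [Set.mem_singleton_iff] at hw2
    exact hw2 ▸ hw1
  · intro h
    exact ⟨y, h, rfl⟩

lemma imprint_subset (G : SimpleGraph V) (x0 : V) (A : Set V) : imprint G x0 A ⊆ A :=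
  fun _ hz => hz.1

lemma self_mem_interval (G : SimpleGraph V) (x0 z : V) : z ∈ interval G x0 z :=
  right_mem_interval G x0 z

lemma imprint_idem (G : SimpleGraph V) (x0 : V) (A : Set V) :
    imprint G x0 (imprint G x0 A) = imprint G x0 A := by
  apply Set.Subset.antisymm (imprint_subset G x0 (imprint G x0 A))
  intro z hz
  refine ⟨hz, ?_⟩
  apply Set.Subset.antisymm
  · rintro w ⟨hw1, hw2⟩
    rw [← hz.2]
    exact ⟨hw1, hw2.1⟩
  · intro w hw
    rw [Set.mem_singleton_iff] at hw
    rw [hw]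
    exact ⟨self_mem_interval G x0 z, hz⟩

lemma exists_imprint_mem (hconn : G.Connected) {A : Set V} {x0 : V} :
    ∀ a ∈ A, ∃ z, z ∈ interval G x0 a ∧ z ∈ imprint G x0 A := by
  suffices h : ∀ n : ℕ, ∀ a ∈ A, G.dist x0 a ≤ n →
      ∃ z, z ∈ interval G x0 a ∧ z ∈ imprint G x0 A from
    fun a ha => h (G.dist x0 a) a ha le_rfl
  intro n
  induction n with
  | zero =>
    intro a ha hd
    by_cases h : interval G x0 a ∩ A = {a}
    · exact ⟨a, self_mem_interval G x0 a, ha, h⟩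
    · exfalso
      apply h
      apply Set.Subset.antisymm
      · rintro w ⟨hw1, hw2⟩
        rw [mem_interval] at hw1
        have h0 : G.dist x0 w = 0 := by omega
        have h0' : G.dist x0 a = 0 := by omega
        rw [Set.mem_singleton_iff]
        exact (hconn.dist_eq_zero_iff.mp h0).symm.trans (hconn.dist_eq_zero_iff.mp h0')
      · intro w hw
        rw [Set.mem_singleton_iff] at hw
        rw [hw]
        exact ⟨self_mem_interval G x0 a, ha⟩
  | succ n ihn =>
    intro a ha hd
    by_cases h : interval G x0 a ∩ A = {a}
    · exact ⟨a, self_mem_interval G x0 a, ha, h⟩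
    · have hex : ∃ w, w ∈ interval G x0 a ∩ A ∧ w ≠ a := by
        by_contra hc
        push_neg at hc
        apply h
        apply Set.Subset.antisymm
        · intro w hw
          exact hc w hw
        · intro w hw
          rw [Set.mem_singleton_iff] at hw
          rw [hw]
          exact ⟨self_mem_interval G x0 a, ha⟩
      obtain ⟨w, ⟨hw1, hw2⟩, hwa⟩ := hex
      have hpos : 0 < G.dist w a := hconn.pos_dist_of_ne hwa
      have hdw : G.dist x0 w ≤ n := by
        rw [mem_interval] at hw1
        omega
      obtain ⟨z, hz1, hz2⟩ := ihn w hw2 hdw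
      exact ⟨z, interval_subset_left hconn hw1 hz1, hz2⟩

lemma prox_inter {x0 : V} {K : Set V} (hK : IsProximal G x0 K) {k : V} (hk : k ∈ K) :
    interval G x0 k ∩ K = {k} := by
  rw [← hK.1] at hk
  exact hk.2

end Stmt7Aux

open Stmt7Aux

/-- In an `S3`-graph, `K ∈ Max(Υ_{x0})` if and only if `K` is
a maximal by inclusion `x0`-proximal set (a facet of `Υ_{x0}`) satisfying
condition (P3): for every `y ∉ K` with `R := (y/x0) ∩ K ≠ ∅` one has
`x0 ∈ conv((K ∖ R) ∪ {y})`. -/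
theorem stmt7 {V : Type*} [Fintype V] (G : SimpleGraph V) (hconn : G.Connected)
    (hS3 : IsS3 G) (x0 : V) (K : Set V) :
    MaxProximal G x0 K ↔
      (IsProximal G x0 K ∧
        ∀ K' : Set V, IsProximal G x0 K' → K ⊆ K' → K' = K) ∧
      (∀ y : V, y ∉ K → (shadow G {y} {x0} ∩ K).Nonempty →
        x0 ∈ convHull G ((K \ shadow G {y} {x0}) ∪ {y})) := by
  constructor
  · rintro ⟨hprox, hmaxi⟩
    refine ⟨⟨hprox, ?_⟩, ?_⟩
    · intro K' hK' hsub
      apply hmaxi K' hK'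
      intro k hk
      rw [mem_shadow_iff hconn hS3]
      exact ⟨k, self_mem_interval G x0 k, hsub hk⟩
    · intro y hyK hR
      by_contra hx0
      set A : Set V := (K \ shadow G {y} {x0}) ∪ {y} with hA
      set Kd : Set V := imprint G x0 A with hKd
      have hKdA : Kd ⊆ A := imprint_subset G x0 A
      have hKdprox : IsProximal G x0 Kd :=
        ⟨imprint_idem G x0 A, fun h => hx0 (convHull_mono G hKdA h)⟩
      have hpre : preceq G x0 K Kd := by
        intro k hk
        rw [mem_shadow_iff hconn hS3]
        by_cases hks : k ∈ shadow G {y} {x0}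
        · have hy : y ∈ interval G x0 k := (mem_shadow_single hconn hS3).mp hks
          have hyA : y ∈ A := Or.inr rfl
          obtain ⟨z, hz1, hz2⟩ := exists_imprint_mem hconn y hyA
          exact ⟨z, interval_subset_left hconn hy hz1, hz2⟩
        · have hkA : k ∈ A := Or.inl ⟨hk, hks⟩
          obtain ⟨z, hz1, hz2⟩ := exists_imprint_mem hconn k hkA
          exact ⟨z, hz1, hz2⟩
      have hKdK : Kd = K := hmaxi Kd hKdprox hpre
      obtain ⟨r, hr1, hr2⟩ := hR
      have hrA : r ∈ A := hKdA (hKdK ▸ hr2)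
      rcases hrA with h | h
      · exact h.2 hr1
      · rw [Set.mem_singleton_iff] at h
        exact hyK (h ▸ hr2)
  · rintro ⟨⟨hprox, hfacet⟩, hP3⟩
    refine ⟨hprox, ?_⟩
    intro K' hK' hpre
    obtain ⟨H, ⟨hHc, hHcc⟩, hx0H, hK'H⟩ :=
      hS3 x0 (convHull G K') (isConvex_convHull G K') hK'.2
    have hx0H' : x0 ∈ H := hx0H rfl
    have hKH : K ⊆ Hᶜ := by
      intro k hk hkH
      obtain ⟨z, hz1, hz2⟩ := (mem_shadow_iff hconn hS3).mp (hpre hk)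
      exact (hK'H (subset_convHull G K' hz2)) (hHc x0 hx0H' k hkH hz1)
    have hunion : K ∪ K' ⊆ Hᶜ :=
      Set.union_subset hKH (fun z hz => hK'H (subset_convHull G K' hz))
    have hx0cup : x0 ∉ convHull G (K ∪ K') := fun h => (convHull_min hHcc hunion h) hx0H'
    have step2 : ∀ y ∈ K', y ∉ K → ∀ k ∈ K, y ∉ interval G x0 k := by
      intro y hyK' hyK k hk hyint
      have hR : (shadow G {y} {x0} ∩ K).Nonempty :=
        ⟨k, (mem_shadow_single hconn hS3).mpr hyint, hk⟩
      have hP := hP3 y hyK hR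
      apply hx0cup
      apply convHull_mono G ?_ hP
      rintro w (⟨hw1, _⟩ | hw)
      · exact Or.inl hw1
      · rw [Set.mem_singleton_iff] at hw
        exact Or.inr (hw ▸ hyK')
    have hsub : K' ⊆ K := by
      intro y hyK'
      by_contra hyK
      have hAprox : IsProximal G x0 (K ∪ {y}) := by
        constructor
        · apply Set.Subset.antisymm (imprint_subset G x0 (K ∪ {y}))
          rintro w (hw | hw)
          · refine ⟨Or.inl hw, ?_⟩
            apply Set.Subset.antisymm
            · rintro t ⟨ht1, ht2 | ht2⟩
              · rw [← prox_inter hprox hw]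
                exact ⟨ht1, ht2⟩
              · rw [Set.mem_singleton_iff] at ht2
                exact absurd (ht2 ▸ ht1) (step2 y hyK' hyK w hw)
            · intro t ht
              rw [Set.mem_singleton_iff] at ht
              rw [ht]
              exact ⟨self_mem_interval G x0 w, Or.inl hw⟩
          · rw [Set.mem_singleton_iff] at hw
            rw [hw]
            refine ⟨Or.inr rfl, ?_⟩
            apply Set.Subset.antisymm
            · rintro t ⟨ht1, htK | hty⟩
              · exfalso
                obtain ⟨z, hz1, hz2⟩ := (mem_shadow_iff hconn hS3).mp (hpre htK)
                have hz1' : z ∈ interval G x0 y := interval_subset_left hconn ht1 hz1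
                have hzy : z = y := by
                  have hmem : z ∈ interval G x0 y ∩ K' := ⟨hz1', hz2⟩
                  rwa [prox_inter hK' hyK', Set.mem_singleton_iff] at hmem
                exact step2 y hyK' hyK t htK (hzy ▸ hz1)
              · exact hty
            · intro t ht
              rw [Set.mem_singleton_iff] at ht
              rw [ht]
              exact ⟨self_mem_interval G x0 y, Or.inr rfl⟩
        · intro h
          apply hx0cup
          apply convHull_mono G ?_ h
          rintro w (hw | hw)
          · exact Or.inl hw
          · rw [Set.mem_singleton_iff] at hw
            exact Or.inr (hw ▸ hyK')
      have heq := hfacet (K ∪ {y}) hAprox Set.subset_union_left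
      exact hyK (heq ▸ (Or.inr rfl : y ∈ K ∪ {y}))
    apply Set.Subset.antisymm hsub
    intro k hk
    obtain ⟨z, hz1, hz2⟩ := (mem_shadow_iff hconn hS3).mp (hpre hk)
    have hmem : z ∈ interval G x0 k ∩ K := ⟨hz1, hsub hz2⟩
    rw [prox_inter hprox hk, Set.mem_singleton_iff] at hmem
    exact hmem ▸ hz2
end

section
/- Let G be a finite connected simple graph satisfying the triangle condition (TC). If A is a convex set of G and x0 ∉ A is a vertex adjacent to A, then K = N(x0) ∩ A is a clique of G and K = Imp_{x0}(A). -/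
open PaperS3

/-- In a graph satisfying the triangle condition, for any
convex set `A` and any vertex `x0 ∉ A` adjacent to `A`, the set
`K = N(x0) ∩ A` is a clique and `K = Imp_{x0}(A)`. -/
theorem stmt8 {V : Type*} [Fintype V] (G : SimpleGraph V) (hconn : G.Connected)
    (hTC : TriangleCondition G) (A : Set V) (x0 : V)
    (hA : IsConvex G A) (hx0 : x0 ∉ A) (hadj : AdjSet G x0 A) :
    G.IsClique (G.neighborSet x0 ∩ A) ∧
      G.neighborSet x0 ∩ A = imprint G x0 A := by
  classical
  obtain ⟨a, haA, haadj⟩ := hadj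
  have hda : G.dist x0 a = 1 := SimpleGraph.dist_eq_one_iff_adj.mpr haadj
  -- K is a clique
  have hclique : G.IsClique (G.neighborSet x0 ∩ A) := by
    intro u hu v hv huv
    by_contra hne
    have hdu : G.dist u x0 = 1 := by
      rw [SimpleGraph.dist_comm]
      exact SimpleGraph.dist_eq_one_iff_adj.mpr hu.1
    have hdv : G.dist x0 v = 1 := SimpleGraph.dist_eq_one_iff_adj.mpr hv.1
    have h2 : G.dist u v = 2 := by
      have hle : G.dist u v ≤ 2 := by
        have := hconn.dist_triangle (u := u) (v := x0) (w := v)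
        omega
      have h0 : G.dist u v ≠ 0 := by
        have := hconn.pos_dist_of_ne huv
        omega
      have h1 : G.dist u v ≠ 1 := fun h =>
        hne (SimpleGraph.dist_eq_one_iff_adj.mp h)
      omega
    have hx0int : x0 ∈ interval G u v := by
      simp only [interval, Set.mem_setOf_eq, hdu, hdv, h2]
    exact hx0 (hA u hu.2 v hv.2 hx0int)
  refine ⟨hclique, ?_⟩
  ext z
  constructor
  · rintro ⟨hzN, hzA⟩
    have hdz : G.dist x0 z = 1 := SimpleGraph.dist_eq_one_iff_adj.mpr hzN
    refine ⟨hzA, ?_⟩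
    ext w
    simp only [interval, Set.mem_inter_iff, Set.mem_setOf_eq, Set.mem_singleton_iff]
    constructor
    · rintro ⟨hw, hwA⟩
      rw [hdz] at hw
      rcases Nat.le_one_iff_eq_zero_or_eq_one.mp (le_of_add_le_left hw.le) with h0 | h1
      · exfalso
        obtain rfl := (hconn.dist_eq_zero_iff).mp h0
        exact hx0 hwA
      · have : G.dist w z = 0 := by omega
        exact (hconn.dist_eq_zero_iff).mp this
    · rintro rfl
      refine ⟨?_, hzA⟩
      simp [SimpleGraph.dist_self]
  · rintro ⟨hzA, hzint⟩
    refine ⟨?_, hzA⟩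
    -- show G.Adj x0 z
    set k := G.dist x0 z with hk
    have hzx0 : z ≠ x0 := fun h => hx0 (h ▸ hzA)
    have hkpos : 0 < k := hconn.pos_dist_of_ne (Ne.symm hzx0)
    have hk1 : k = 1 := by
      by_contra hge
      have hk2 : 2 ≤ k := by omega
      -- a ≠ z and a not in interval, so dist a z ≥ k
      have haz : G.dist a z ≥ k := by
        by_contra hlt
        push_neg at hlt
        have htri : k ≤ 1 + G.dist a z := by
          have := hconn.dist_triangle (u := x0) (v := a) (w := z)
          omega
        have heq : G.dist x0 a + G.dist a z = k := by omega
        have : a ∈ interval G x0 z ∩ A := ⟨heq, haA⟩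
        rw [hzint] at this
        rw [this] at hda
        omega
      have haz' : G.dist a z = k := by
        have htri2 : G.dist a z ≤ 1 + k := by
          have h1 := hconn.dist_triangle (u := a) (v := x0) (w := z)
          have h2 : G.dist a x0 = 1 := by rw [SimpleGraph.dist_comm]; exact hda
          omega
        rcases Nat.lt_or_ge (G.dist a z) (k + 1) with h | h
        · omega
        · exfalso
          have hint : x0 ∈ interval G a z := by
            have h3 : G.dist a z = k + 1 := by omega
            have h2 : G.dist a x0 = 1 := by rw [SimpleGraph.dist_comm]; exact hda
            simp only [interval, Set.mem_setOf_eq, h2, h3, hk]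
            omega
          exact hx0 (hA a haA z hzA hint)
      -- apply TC with u = z, v = x0, w = a
      obtain ⟨x, hxx0, hxa, hxd⟩ := hTC z x0 a haadj
        (by rw [SimpleGraph.dist_comm (u := z) (v := x0), SimpleGraph.dist_comm (u := z) (v := a), ← hk, haz'])
      have hdzx : G.dist z x + 1 = k := by
        rw [hxd, SimpleGraph.dist_comm]
      -- x ∈ interval a z ⊆ A
      have hxA : x ∈ A := by
        refine hA a haA z hzA ?_
        have h1 : G.dist a x = 1 := SimpleGraph.dist_eq_one_iff_adj.mpr hxa
        have h2 : G.dist x z = k - 1 := by rw [SimpleGraph.dist_comm]; omega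
        simp only [interval, Set.mem_setOf_eq, h1, h2, haz']
        omega
      -- x ∈ interval x0 z ∩ A = {z}
      have hxz : x = z := by
        have h1 : G.dist x0 x = 1 := SimpleGraph.dist_eq_one_iff_adj.mpr hxx0
        have h2 : G.dist x z = k - 1 := by rw [SimpleGraph.dist_comm]; omega
        have : x ∈ interval G x0 z ∩ A := by
          refine ⟨?_, hxA⟩
          simp only [interval, Set.mem_setOf_eq, h1, h2, hk]
          omega
        rw [hzint] at this
        exact this
      rw [hxz] at hdzx
      simp [SimpleGraph.dist_self] at hdzx
      omega
    exact SimpleGraph.dist_eq_one_iff_adj.mp hk1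
end

section
/- Let G be a finite connected simple graph satisfying the triangle condition (TC) and having convex intervals. Then the following are equivalent: (i) for every pointed maximal clique (x0, K) of G, the shadow K/x0 is convex (G has convex clique-shadows); (ii) the semispaces of G are exactly the shadows K/x0 where (x0, K) ranges over pointed maximal cliques and x0 is an attaching point of K/x0, i.e., every semispace at a vertex x0 adjacent to it equals K/x0 for some pointed maximal clique (x0, K), and every such K/x0 is a semispace at x0. -/
open PaperS3

section Aux

variable {V : Type*} {G : SimpleGraph V}

lemma aux_left_mem_interval (G : SimpleGraph V) (u v : V) : u ∈ interval G u v := by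
  simp [interval, SimpleGraph.dist_self]

lemma aux_right_mem_interval (G : SimpleGraph V) (u v : V) : v ∈ interval G u v := by
  simp [interval, SimpleGraph.dist_self]

lemma aux_convHull_pair (hint : ∀ u v : V, IsConvex G (interval G u v)) (u v : V) :
    convHull G ({u} ∪ {v}) = interval G u v := by
  apply subset_antisymm
  · apply Set.sInter_subset_of_mem
    refine ⟨hint u v, ?_⟩
    rintro w (rfl | rfl)
    · exact aux_left_mem_interval G w v
    · exact aux_right_mem_interval G u w
  · intro w hw C hC
    exact hC.1 u (hC.2 (Or.inl rfl)) v (hC.2 (Or.inr rfl)) hw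

lemma aux_mem_shadow_iff (hint : ∀ u v : V, IsConvex G (interval G u v))
    (K : Set V) (x0 x : V) :
    x ∈ shadow G K {x0} ↔ (interval G x0 x ∩ K).Nonempty := by
  show (convHull G ({x0} ∪ {x}) ∩ K).Nonempty ↔ _
  rw [aux_convHull_pair hint]

lemma aux_x0_notMem_shadow (hconn : G.Connected)
    (hint : ∀ u v : V, IsConvex G (interval G u v)) {K : Set V} {x0 : V}
    (hx0 : x0 ∉ K) : x0 ∉ shadow G K {x0} := by
  rw [aux_mem_shadow_iff hint]
  rintro ⟨w, hw1, hw2⟩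
  have hw0 : G.dist x0 w = 0 := by
    have : G.dist x0 w + G.dist w x0 = G.dist x0 x0 := hw1
    rw [SimpleGraph.dist_self] at this
    omega
  rw [hconn.dist_eq_zero_iff] at hw0
  exact hx0 (hw0 ▸ hw2)

lemma aux_subset_shadow (hint : ∀ u v : V, IsConvex G (interval G u v))
    (K : Set V) (x0 : V) : K ⊆ shadow G K {x0} := by
  intro y hy
  rw [aux_mem_shadow_iff hint]
  exact ⟨y, aux_right_mem_interval G x0 y, hy⟩

/-- Core lemma: if `S` is convex, avoids `x0`, and contains a neighbor of `x0`,
then for every `x ∈ S` there is a neighbor of `x0` in `S ∩ interval G x0 x`. -/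
lemma aux_core (hconn : G.Connected) (hTC : TriangleCondition G) {S : Set V}
    (hS : IsConvex G S) {x0 : V} (hx0 : x0 ∉ S)
    (hNne : ∃ y ∈ S, G.Adj x0 y) {x : V} (hx : x ∈ S) :
    ∃ z, z ∈ interval G x0 x ∧ z ∈ S ∧ G.Adj x0 z := by
  obtain ⟨y, hyS, hyadj⟩ := hNne
  have hd1 : G.dist x0 y = 1 := SimpleGraph.dist_eq_one_iff_adj.mpr hyadj
  have hd1' : G.dist y x0 = 1 := SimpleGraph.dist_eq_one_iff_adj.mpr hyadj.symm
  set k := G.dist x0 x with hk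
  have ht1 : G.dist y x ≤ G.dist y x0 + G.dist x0 x := hconn.dist_triangle
  have ht2 : G.dist x0 x ≤ G.dist x0 y + G.dist y x := hconn.dist_triangle
  rcases (by omega : G.dist y x = 1 + k ∨ G.dist y x + 1 = k ∨ G.dist y x = k) with h | h | h
  · -- x0 lies between y and x, contradiction
    exfalso
    apply hx0
    apply hS y hyS x hx
    show G.dist y x0 + G.dist x0 x = G.dist y x
    omega
  · -- y lies between x0 and x
    refine ⟨y, ?_, hyS, hyadj⟩
    show G.dist x0 y + G.dist y x = G.dist x0 x
    omega
  · -- use the triangle condition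
    have e1 : G.dist x x0 = k := by rw [hk]; exact SimpleGraph.dist_comm
    have e2 : G.dist x y = k := by rw [← h]; exact SimpleGraph.dist_comm
    obtain ⟨z, hzx0, hzy, hzd⟩ := hTC x x0 y hyadj (e1.trans e2.symm)
    have hzx : G.dist z x + 1 = k := by
      have : G.dist z x = G.dist x z := SimpleGraph.dist_comm
      omega
    have hzy1 : G.dist y z = 1 := SimpleGraph.dist_eq_one_iff_adj.mpr hzy
    have hz01 : G.dist x0 z = 1 := SimpleGraph.dist_eq_one_iff_adj.mpr hzx0
    have hzyx : z ∈ interval G y x := by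
      show G.dist y z + G.dist z x = G.dist y x
      omega
    refine ⟨z, ?_, hS y hyS x hx hzyx, hzx0⟩
    show G.dist x0 z + G.dist z x = G.dist x0 x
    omega

/-- A neighbor of `x0` lying in a convex set containing `K` and avoiding `x0`
must belong to `K`, when `insert x0 K` is a maximal clique. -/
lemma aux_mem_of_adj (hconn : G.Connected) {S : Set V} (hS : IsConvex G S)
    {x0 : V} {K : Set V} (hx0S : x0 ∉ S) (hx0K : x0 ∉ K) (hKS : K ⊆ S)
    (hmax : MaxClique G (insert x0 K)) {z : V} (hzS : z ∈ S) (hadj : G.Adj x0 z) :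
    z ∈ K := by
  by_contra hzK
  have hzx0 : z ≠ x0 := fun h => G.irrefl (h ▸ hadj)
  have hznot : z ∉ insert x0 K := by
    rintro (h | h)
    · exact hzx0 h
    · exact hzK h
  -- z cannot be adjacent to all of `insert x0 K`, else the clique grows
  have hexy : ∃ y ∈ K, y ≠ z ∧ ¬ G.Adj z y := by
    by_contra hcon
    push_neg at hcon
    have hclique : G.IsClique (insert z (insert x0 K)) := by
      apply hmax.1.insert
      rintro b (rfl | hb) hbz
      · exact hadj.symm
      · exact hcon b hb (Ne.symm hbz)
    have := hmax.2 _ hclique (Set.subset_insert _ _)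
    exact hznot (this ▸ Set.mem_insert z _)
  obtain ⟨y, hyK, hyz, hnadj⟩ := hexy
  have hyadj : G.Adj x0 y :=
    hmax.1 (Set.mem_insert _ _) (Set.mem_insert_of_mem _ hyK)
      (fun h => hx0K (by rw [h]; exact hyK))
  have h1 : G.dist z x0 = 1 := SimpleGraph.dist_eq_one_iff_adj.mpr hadj.symm
  have h2 : G.dist x0 y = 1 := SimpleGraph.dist_eq_one_iff_adj.mpr hyadj
  have h3 : G.dist z y ≤ G.dist z x0 + G.dist x0 y := hconn.dist_triangle
  have h4 : G.dist z y ≠ 0 := fun h => hyz.symm (hconn.dist_eq_zero_iff.mp h)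
  have h5 : G.dist z y ≠ 1 := fun h => hnadj (SimpleGraph.dist_eq_one_iff_adj.mp h)
  have hmem : x0 ∈ interval G z y := by
    show G.dist z x0 + G.dist x0 y = G.dist z y
    omega
  exact hx0S (hS z hzS y (hKS hyK) hmem)

/-- Every clique extends to a maximal clique. -/
lemma aux_exists_maxClique (K : Set V) (hK : G.IsClique K) :
    ∃ C : Set V, K ⊆ C ∧ MaxClique G C := by
  obtain ⟨m, hKm, hm⟩ := zorn_subset_nonempty {C : Set V | G.IsClique C}
    (fun c hc hchain _ => by
      refine ⟨⋃₀ c, ?_, fun s hs => Set.subset_sUnion_of_mem hs⟩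
      intro u hu v hv hne
      obtain ⟨s, hs, hus⟩ := hu
      obtain ⟨t, ht, hvt⟩ := hv
      rcases hchain.total hs ht with h | h
      · exact hc ht (h hus) hvt hne
      · exact hc hs hus (h hvt) hne) K hK
  exact ⟨m, hKm, hm.prop, fun K' hK' hsub => subset_antisymm (hm.2 hK' hsub) hsub⟩

end Aux

/-- For a graph satisfying the triangle condition and having
convex intervals, the following are equivalent: (i) the shadow `K/x0` is
convex for every pointed maximal clique `(x0, K)`; (ii) the semispaces of `G`
are exactly the shadows `K/x0` of pointed maximal cliques `(x0, K)` with
attaching point `x0`. -/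
theorem stmt11 {V : Type*} [Fintype V] (G : SimpleGraph V) (hconn : G.Connected)
    (hTC : TriangleCondition G)
    (hint : ∀ u v : V, IsConvex G (interval G u v)) :
    (∀ (x0 : V) (K : Set V), PointedMaxClique G x0 K →
        IsConvex G (shadow G K {x0})) ↔
      ((∀ (S : Set V) (x0 : V), IsSemispaceAt G x0 S → AdjSet G x0 S →
          ∃ K : Set V, PointedMaxClique G x0 K ∧ S = shadow G K {x0}) ∧
        (∀ (x0 : V) (K : Set V), PointedMaxClique G x0 K →
          IsSemispaceAt G x0 (shadow G K {x0}))) := by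
  constructor
  · intro hi
    constructor
    · -- (a) every semispace at `x0` adjacent to `x0` is a shadow
      intro S x0 hSem hAdj
      obtain ⟨a, haS, haadj⟩ := hAdj
      set N : Set V := {y | y ∈ S ∧ G.Adj x0 y} with hN
      have hNclique : G.IsClique N := by
        intro y hy z hz hne
        by_contra hnadj
        have h1 : G.dist y x0 = 1 := SimpleGraph.dist_eq_one_iff_adj.mpr hy.2.symm
        have h2 : G.dist x0 z = 1 := SimpleGraph.dist_eq_one_iff_adj.mpr hz.2
        have h3 : G.dist y z ≤ G.dist y x0 + G.dist x0 z := hconn.dist_triangle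
        have h4 : G.dist y z ≠ 0 := fun h => hne (hconn.dist_eq_zero_iff.mp h)
        have h5 : G.dist y z ≠ 1 := fun h => hnadj (SimpleGraph.dist_eq_one_iff_adj.mp h)
        have hmem : x0 ∈ interval G y z := by
          show G.dist y x0 + G.dist x0 z = G.dist y z
          omega
        exact hSem.2.1 (hSem.1 y hy.1 z hz.1 hmem)
      have hclique : G.IsClique (insert x0 N) :=
        hNclique.insert (fun b hb _ => hb.2)
      obtain ⟨C, hNC, hCmax⟩ := aux_exists_maxClique _ hclique
      have hx0C : x0 ∈ C := hNC (Set.mem_insert _ _)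
      set K : Set V := C \ {x0} with hKdef
      have hins : insert x0 K = C := by
        rw [hKdef, Set.insert_diff_singleton, Set.insert_eq_self.mpr hx0C]
      have hx0K : x0 ∉ K := fun h => h.2 rfl
      have hpmk : PointedMaxClique G x0 K :=
        ⟨hCmax.1.subset Set.diff_subset, hx0K, by rw [hins]; exact hCmax⟩
      refine ⟨K, hpmk, ?_⟩
      have hsub : S ⊆ shadow G K {x0} := by
        intro x hx
        obtain ⟨z, hzI, hzS, hzadj⟩ :=
          aux_core hconn hTC hSem.1 hSem.2.1 ⟨a, haS, haadj⟩ hx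
        have hzK : z ∈ K := by
          refine ⟨hNC (Set.mem_insert_of_mem _ ⟨hzS, hzadj⟩), fun h => ?_⟩
          have hzx0 : z = x0 := h
          exact G.irrefl (hzx0 ▸ hzadj)
        rw [aux_mem_shadow_iff hint]
        exact ⟨z, hzI, hzK⟩
      exact (hSem.2.2 _ (hi x0 K hpmk) (aux_x0_notMem_shadow hconn hint hx0K) hsub).symm
    · -- (b) shadows of pointed maximal cliques are semispaces
      intro x0 K hpmk
      obtain ⟨hKcl, hx0K, hmax⟩ := hpmk
      refine ⟨hi x0 K ⟨hKcl, hx0K, hmax⟩,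
        aux_x0_notMem_shadow hconn hint hx0K, ?_⟩
      intro S' hS' hx0S' hsub
      refine subset_antisymm ?_ hsub
      rcases K.eq_empty_or_nonempty with rfl | ⟨y0, hy0⟩
      · -- `K = ∅`: then `x0` has no neighbors, so by connectedness `V = {x0}`
        intro x hx
        exfalso
        have hxne : x ≠ x0 := fun h => hx0S' (h ▸ hx)
        have hnb : ∃ b, G.Adj x0 b := by
          obtain ⟨w⟩ := hconn.preconnected x0 x
          cases w with
          | nil => exact absurd rfl hxne
          | cons h p => exact ⟨_, h⟩
        obtain ⟨b, hb⟩ := hnb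
        have hclique : G.IsClique (insert b (insert x0 (∅ : Set V))) := by
          apply hmax.1.insert
          rintro c (rfl | hc) _
          · exact hb.symm
          · exact absurd hc (Set.notMem_empty _)
        have heq := hmax.2 _ hclique (Set.subset_insert _ _)
        have hbmem : b ∈ insert x0 (∅ : Set V) := heq ▸ Set.mem_insert b _
        rcases hbmem with h | h
        · exact G.irrefl (h ▸ hb)
        · exact absurd h (Set.notMem_empty _)
      · intro x hx
        have hy0adj : G.Adj x0 y0 :=
          hmax.1 (Set.mem_insert _ _) (Set.mem_insert_of_mem _ hy0)
            (fun h => hx0K (by rw [h]; exact hy0))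
        have hKS' : K ⊆ S' := (aux_subset_shadow hint K x0).trans hsub
        obtain ⟨z, hzI, hzS, hzadj⟩ :=
          aux_core hconn hTC hS' hx0S' ⟨y0, hKS' hy0, hy0adj⟩ hx
        have hzK : z ∈ K := aux_mem_of_adj hconn hS' hx0S' hx0K hKS' hmax hzS hzadj
        rw [aux_mem_shadow_iff hint]
        exact ⟨z, hzI, hzK⟩
  · rintro ⟨_, h2⟩ x0 K hpmk
    exact (h2 x0 K hpmk).1
end

section
/- For a finite connected simple graph G satisfying the triangle condition (TC), the following conditions are equivalent: (i) G is an S3-graph; (ii) for every pointed maximal clique (x0, K), the shadows x0/K and K/x0 are convex and disjoint; (iii) for every pointed maximal clique (x0, K), the vertex x0 and the set K are separated by complementary halfspaces; (iv) for every pointed maximal clique (x0, K), the shadow K/x0 and the extended shadow x0//K are convex. -/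
namespace PaperS3
variable {V : Type*} {G : SimpleGraph V} {x0 : V} {K : Set V}

lemma mem_interval_left (u v : V) : u ∈ interval G u v := by simp [interval]

lemma mem_interval_right (u v : V) : v ∈ interval G u v := by simp [interval]

lemma convHull_convex (A : Set V) : IsConvex G (convHull G A) := by
  intro u hu v hv w hw C hC
  exact hC.1 u (hu C hC) v (hv C hC) hw

lemma subset_convHull (A : Set V) : A ⊆ convHull G A := by
  intro a ha C hC
  exact hC.2 ha

lemma convHull_min {A C : Set V} (hC : IsConvex G C) (hAC : A ⊆ C) : convHull G A ⊆ C :=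
  fun _ hx => hx C ⟨hC, hAC⟩

lemma convHull_mono {A B : Set V} (h : A ⊆ B) : convHull G A ⊆ convHull G B :=
  convHull_min (convHull_convex B) (h.trans (subset_convHull B))

lemma interval_subset_convHull {u v : V} {A : Set V} (hu : u ∈ A) (hv : v ∈ A) :
    interval G u v ⊆ convHull G A :=
  (convHull_convex A) u (subset_convHull A hu) v (subset_convHull A hv)

lemma dist_adj {u v : V} (h : G.Adj u v) : G.dist u v = 1 :=
  SimpleGraph.dist_eq_one_iff_adj.mpr h

lemma interval_self (hc : G.Connected) (u : V) : interval G u u = {u} := by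
  ext w
  simp only [interval, Set.mem_setOf_eq, SimpleGraph.dist_self, Set.mem_singleton_iff]
  constructor
  · intro h
    have : G.dist u w = 0 := by omega
    exact ((hc.dist_eq_zero_iff).mp this).symm
  · rintro rfl; simp

lemma interval_adj (hc : G.Connected) {u v : V} (h : G.Adj u v) :
    interval G u v = {u, v} := by
  ext w
  simp only [interval, Set.mem_setOf_eq, dist_adj h, Set.mem_insert_iff, Set.mem_singleton_iff]
  constructor
  · intro hw
    rcases Nat.eq_zero_or_pos (G.dist u w) with h0 | hpos
    · exact Or.inl ((hc.dist_eq_zero_iff).mp h0).symm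
    · have : G.dist w v = 0 := by omega
      exact Or.inr ((hc.dist_eq_zero_iff).mp this)
  · rintro (rfl | rfl) <;> simp [SimpleGraph.dist_self, dist_adj h]

lemma clique_convex (hc : G.Connected) {K : Set V} (hK : G.IsClique K) : IsConvex G K := by
  intro u hu v hv w hw
  rcases eq_or_ne u v with rfl | hne
  · rw [interval_self hc] at hw
    exact hw ▸ hu
  · rw [interval_adj hc (hK hu hv hne)] at hw
    rcases hw with rfl | rfl
    · exact hu
    · exact hv

lemma exists_adj_dist (hc : G.Connected) {u v : V} {m : ℕ} (h : G.dist u v = m + 1) :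
    ∃ w, G.Adj u w ∧ G.dist w v = m := by
  have hne : G.dist u v ≠ 0 := by omega
  obtain ⟨p, hp⟩ := SimpleGraph.exists_walk_of_dist_ne_zero hne
  cases p with
  | nil => simp at hp; simp at hne
  | @cons _ w _ hadj q =>
    refine ⟨w, hadj, ?_⟩
    have h1 : G.dist w v ≤ q.length := SimpleGraph.dist_le q
    have h2 : G.dist u v ≤ G.dist u w + G.dist w v := hc.dist_triangle
    have h3 : G.dist u w = 1 := dist_adj hadj
    simp only [SimpleGraph.Walk.length_cons] at hp
    omega

lemma interval_trans (hc : G.Connected) {p z s w : V}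
    (hw : w ∈ interval G p z) (hz : z ∈ interval G p s) : w ∈ interval G p s := by
  simp only [interval, Set.mem_setOf_eq] at *
  have t1 : G.dist p s ≤ G.dist p w + G.dist w s := hc.dist_triangle
  have t2 : G.dist w s ≤ G.dist w z + G.dist z s := hc.dist_triangle
  omega

lemma exists_maximal_superset [Fintype V] (P : Set V → Prop) {A : Set V} (hA : P A) :
    ∃ B, P B ∧ A ⊆ B ∧ ∀ C, P C → B ⊆ C → C = B := by
  classical
  set S : Set ℕ := {n | ∃ B : Set V, (P B ∧ A ⊆ B) ∧ B.ncard = n} with hS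
  have hne : S.Nonempty := ⟨A.ncard, A, ⟨hA, subset_rfl⟩, rfl⟩
  have hbdd : BddAbove S := by
    refine ⟨Fintype.card V, ?_⟩
    rintro n ⟨B, _, rfl⟩
    calc B.ncard ≤ (Set.univ : Set V).ncard :=
          Set.ncard_le_ncard (Set.subset_univ B) Set.finite_univ
      _ = Fintype.card V := by rw [Set.ncard_univ, Nat.card_eq_fintype_card]
  obtain ⟨B, ⟨hPB, hAB⟩, hcard⟩ := Nat.sSup_mem hne hbdd
  refine ⟨B, hPB, hAB, fun C hPC hBC => ?_⟩
  have hCmem : C.ncard ∈ S := ⟨C, ⟨hPC, hAB.trans hBC⟩, rfl⟩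
  have hle : C.ncard ≤ B.ncard := hcard ▸ le_csSup hbdd hCmem
  exact (Set.eq_of_subset_of_ncard_le hBC hle (Set.toFinite C)).symm

lemma pmc_adj (hP : PointedMaxClique G x0 K) {y : V} (hy : y ∈ K) : G.Adj x0 y :=
  hP.2.2.1 (Set.mem_insert _ _) (Set.mem_insert_of_mem _ hy) (fun h => hP.2.1 (h ▸ hy))

end PaperS3
namespace PaperS3
variable {V : Type*} {G : SimpleGraph V} {x0 : V} {K : Set V}

lemma mem_shadow_iff {A B : Set V} {x : V} :
    x ∈ shadow G A B ↔ (convHull G (B ∪ {x}) ∩ A).Nonempty := Iff.rfl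

lemma pmc_cover (hc : G.Connected) (hP : PointedMaxClique G x0 K) (x : V) :
    x ∈ shadow G K {x0} ∨ x ∈ unionShadow G x0 K ∨ x ∈ Weq G (insert x0 K) := by
  by_cases hW : ∀ y ∈ K, G.dist x y = G.dist x x0
  · right; right
    intro a ha b hb
    have va : G.dist x a = G.dist x x0 := by
      rcases ha with rfl | ha
      · rfl
      · exact hW a ha
    have vb : G.dist x b = G.dist x x0 := by
      rcases hb with rfl | hb
      · rfl
      · exact hW b hb
    rw [va, vb]
  · push_neg at hW
    obtain ⟨y, hy, hne⟩ := hW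
    have hadj := pmc_adj hP hy
    have h1 : G.dist x y ≤ G.dist x x0 + 1 := by
      have := hc.dist_triangle (u := x) (v := x0) (w := y)
      rw [dist_adj hadj] at this
      omega
    have h2 : G.dist x x0 ≤ G.dist x y + 1 := by
      have := hc.dist_triangle (u := x) (v := y) (w := x0)
      rw [dist_adj hadj.symm] at this
      omega
    rcases lt_or_gt_of_ne hne with hlt | hgt
    · left
      have hyint : y ∈ interval G x0 x := by
        simp only [interval, Set.mem_setOf_eq]
        rw [dist_adj hadj, SimpleGraph.dist_comm (u := y) (v := x), SimpleGraph.dist_comm (u := x0) (v := x)]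
        omega
      exact ⟨y, interval_subset_convHull (A := ({x0} ∪ {x} : Set V))
        (Set.mem_union_left _ (Set.mem_singleton _))
        (Set.mem_union_right _ (Set.mem_singleton _)) hyint, hy⟩
    · right; left
      have hx0int : x0 ∈ interval G y x := by
        simp only [interval, Set.mem_setOf_eq]
        rw [dist_adj hadj.symm, SimpleGraph.dist_comm (u := x0) (v := x), SimpleGraph.dist_comm (u := y) (v := x)]
        omega
      refine Set.mem_iUnion₂.mpr ⟨y, hy, ?_⟩
      exact ⟨x0, interval_subset_convHull (A := ({y} ∪ {x} : Set V))
        (Set.mem_union_left _ (Set.mem_singleton _))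
        (Set.mem_union_right _ (Set.mem_singleton _)) hx0int, rfl⟩

lemma weq_subset_shadow (hc : G.Connected) (hTC : TriangleCondition G)
    (hP : PointedMaxClique G x0 K) :
    Weq G (insert x0 K) ⊆ shadow G {x0} K := by
  intro x hx
  by_cases hxx0 : x = x0
  · subst hxx0
    exact ⟨x, subset_convHull _ (Set.mem_union_right _ (Set.mem_singleton _)), rfl⟩
  rcases K.eq_empty_or_nonempty with rfl | ⟨y, hy⟩
  · exfalso
    have hnoadj : ∀ v, ¬ G.Adj x0 v := by
      intro v hv
      have hclq : G.IsClique (insert v (insert x0 (∅ : Set V))) := by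
        refine SimpleGraph.IsClique.insert ?_ ?_
        · intro a ha b hb hab
          rcases ha with rfl | ha
          · rcases hb with rfl | hb
            · exact absurd rfl hab
            · exact absurd hb (Set.notMem_empty b)
          · exact absurd ha (Set.notMem_empty a)
        · intro b hb _
          rcases hb with rfl | hb
          · exact hv.symm
          · exact absurd hb (Set.notMem_empty b)
      have heq := hP.2.2.2 _ hclq (Set.subset_insert _ _)
      have hvmem : v ∈ insert x0 (∅ : Set V) := heq ▸ Set.mem_insert v _
      rcases hvmem with rfl | hvmem
      · exact G.irrefl hv
      · exact absurd hvmem (Set.notMem_empty v)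
    have hdne : G.dist x0 x ≠ 0 := fun h => hxx0 ((hc.dist_eq_zero_iff).mp h).symm
    obtain ⟨p, hp⟩ := SimpleGraph.exists_walk_of_dist_ne_zero hdne
    cases p with
    | nil => exact hdne (by simp at hp; simp)
    | cons h q => exact hnoadj _ h
  · have hadj := pmc_adj hP hy
    have ha : G.dist x x0 = G.dist x y :=
      hx x0 (Set.mem_insert _ _) y (Set.mem_insert_of_mem _ hy)
    obtain ⟨w, hwx0, hwy, hdw⟩ := hTC x x0 y hadj ha
    have hwK : w ∉ K := by
      intro hwmem
      have := hx w (Set.mem_insert_of_mem _ hwmem) x0 (Set.mem_insert _ _)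
      omega
    have hwC : w ∉ insert x0 K := by
      rintro (rfl | h)
      · exact G.irrefl hwx0
      · exact hwK h
    by_cases hclq : G.IsClique (insert w (insert x0 K))
    · exact absurd ((hP.2.2.2 _ hclq (Set.subset_insert _ _)) ▸ Set.mem_insert w _) hwC
    · rw [SimpleGraph.isClique_insert] at hclq
      push_neg at hclq
      obtain ⟨z, hz, hzw, hnadj⟩ := hclq hP.2.2.1
      have hzx0 : z ≠ x0 := fun h => hnadj (h ▸ hwx0.symm)
      have hzK : z ∈ K := hz.resolve_left hzx0
      have hadjz := pmc_adj hP hzK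
      have hdwz : G.dist w z = 2 := by
        have hle : G.dist w z ≤ 2 := by
          have := hc.dist_triangle (u := w) (v := x0) (w := z)
          rw [dist_adj hwx0.symm, dist_adj hadjz] at this
          omega
        have h0 : G.dist w z ≠ 0 := fun h => hzw ((hc.dist_eq_zero_iff).mp h)
        have h1 : G.dist w z ≠ 1 := fun h => hnadj (SimpleGraph.dist_eq_one_iff_adj.mp h)
        omega
      have hwT : w ∈ convHull G (K ∪ {x}) := by
        refine interval_subset_convHull (A := (K ∪ {x} : Set V))
          (Set.mem_union_right _ (Set.mem_singleton _)) (Set.mem_union_left _ hy) ?_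
        simp only [interval, Set.mem_setOf_eq]
        rw [dist_adj hwy.symm]
        omega
      have hzT : z ∈ convHull G (K ∪ {x}) := subset_convHull _ (Set.mem_union_left _ hzK)
      have hx0T : x0 ∈ convHull G (K ∪ {x}) := by
        refine convHull_convex _ w hwT z hzT ?_
        simp only [interval, Set.mem_setOf_eq]
        rw [dist_adj hwx0.symm, dist_adj hadjz, hdwz]
      exact ⟨x0, hx0T, rfl⟩

lemma unionShadow_subset : unionShadow G x0 K ⊆ shadow G {x0} K := by
  intro x hx
  obtain ⟨y, hy, hxy⟩ := Set.mem_iUnion₂.mp hx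
  obtain ⟨v, hv, hvx0⟩ := hxy
  exact ⟨v, convHull_mono (Set.union_subset_union_left _
    (Set.singleton_subset_iff.mpr hy)) hv, hvx0⟩

lemma sep_shadow_eq (hc : G.Connected) (hTC : TriangleCondition G)
    (hP : PointedMaxClique G x0 K) {H : Set V} (hH : IsHalfspace G H)
    (hx0H : x0 ∈ H) (hKH : K ⊆ Hᶜ) :
    shadow G {x0} K = H ∧ shadow G K {x0} = Hᶜ := by
  have sub1 : shadow G {x0} K ⊆ H := by
    rintro x ⟨v, hvhull, hvx0⟩
    have hvx0' : v = x0 := hvx0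
    by_contra hxH
    have hsub : convHull G (K ∪ {x}) ⊆ Hᶜ :=
      convHull_min hH.2 (Set.union_subset hKH (Set.singleton_subset_iff.mpr hxH))
    exact (hvx0' ▸ hsub hvhull) hx0H
  have sub2 : shadow G K {x0} ⊆ Hᶜ := by
    rintro x ⟨v, hvhull, hvK⟩
    by_contra hxH
    rw [Set.notMem_compl_iff] at hxH
    have hsub : convHull G ({x0} ∪ {x}) ⊆ H :=
      convHull_min hH.1 (Set.union_subset (Set.singleton_subset_iff.mpr hx0H)
        (Set.singleton_subset_iff.mpr hxH))
    exact (hKH hvK) (hsub hvhull)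
  have sup1 : H ⊆ shadow G {x0} K := by
    intro h hh
    rcases pmc_cover hc hP h with hK | hU | hW
    · exact absurd hh (sub2 hK)
    · exact unionShadow_subset hU
    · exact weq_subset_shadow hc hTC hP hW
  have sup2 : Hᶜ ⊆ shadow G K {x0} := by
    intro h hh
    rcases pmc_cover hc hP h with hK | hU | hW
    · exact hK
    · exact absurd (sub1 (unionShadow_subset hU)) hh
    · exact absurd (sub1 (weq_subset_shadow hc hTC hP hW)) hh
  exact ⟨sub1.antisymm sup1, sub2.antisymm sup2⟩

end PaperS3
namespace PaperS3
variable {V : Type*} {G : SimpleGraph V} {x0 : V} {K : Set V}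

lemma imp32 (hc : G.Connected) (hTC : TriangleCondition G)
    (h3 : ∀ (x0 : V) (K : Set V), PointedMaxClique G x0 K → SepByHalfspaces G {x0} K)
    (x0 : V) (K : Set V) (hP : PointedMaxClique G x0 K) :
    IsConvex G (shadow G {x0} K) ∧ IsConvex G (shadow G K {x0}) ∧
      Disjoint (shadow G {x0} K) (shadow G K {x0}) := by
  obtain ⟨H, hH, hx0H, hKH⟩ := h3 x0 K hP
  obtain ⟨e1, e2⟩ := sep_shadow_eq hc hTC hP hH (Set.singleton_subset_iff.mp hx0H) hKH
  refine ⟨?_, ?_, ?_⟩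
  · rw [e1]; exact hH.1
  · rw [e2]; exact hH.2
  · rw [e1, e2]; exact disjoint_compl_right

lemma imp24 (hc : G.Connected) (hTC : TriangleCondition G)
    (h2 : ∀ (x0 : V) (K : Set V), PointedMaxClique G x0 K →
      IsConvex G (shadow G {x0} K) ∧ IsConvex G (shadow G K {x0}) ∧
        Disjoint (shadow G {x0} K) (shadow G K {x0}))
    (x0 : V) (K : Set V) (hP : PointedMaxClique G x0 K) :
    IsConvex G (shadow G K {x0}) ∧ IsConvex G (extShadow G x0 K) := by
  obtain ⟨c1, c2, dis⟩ := h2 x0 K hP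
  refine ⟨c2, ?_⟩
  have he : extShadow G x0 K = shadow G {x0} K := by
    apply Set.Subset.antisymm
    · intro x hx
      rcases hx with hU | hW
      · exact unionShadow_subset hU
      · exact weq_subset_shadow hc hTC hP hW
    · intro x hx
      have hnx : x ∉ shadow G K {x0} := fun hmem => Set.disjoint_left.mp dis hx hmem
      rcases pmc_cover hc hP x with hK | hU | hW
      · exact absurd hK hnx
      · exact Or.inl hU
      · exact Or.inr hW
  rw [he]; exact c1

lemma imp43 (hc : G.Connected) (hTC : TriangleCondition G)
    (h4 : ∀ (x0 : V) (K : Set V), PointedMaxClique G x0 K →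
      IsConvex G (shadow G K {x0}) ∧ IsConvex G (extShadow G x0 K))
    (x0 : V) (K : Set V) (hP : PointedMaxClique G x0 K) :
    SepByHalfspaces G {x0} K := by
  obtain ⟨cK, cE⟩ := h4 x0 K hP
  have hKE : ∀ y' ∈ K, y' ∉ extShadow G x0 K := by
    intro y' hy' hmem
    rcases hmem with hU | hW
    · obtain ⟨y, hy, v, hvhull, hvx0⟩ := Set.mem_iUnion₂.mp hU
      have hvx0' : v = x0 := hvx0
      have hcl : G.IsClique ({y} ∪ {y'} : Set V) := by
        intro a ha b hb hne
        have hsK : ∀ c, c ∈ ({y} ∪ {y'} : Set V) → c ∈ K := by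
          rintro c (rfl | hc2)
          · exact hy
          · exact (Set.mem_singleton_iff.mp hc2) ▸ hy'
        exact hP.1 (hsK a ha) (hsK b hb) hne
      have hmem2 := convHull_min (clique_convex hc hcl) subset_rfl hvhull
      rcases hvx0' ▸ hmem2 with h | h
      · have hxy : x0 = y := Set.mem_singleton_iff.mp h
        exact hP.2.1 (by rw [hxy]; exact hy)
      · have hxy : x0 = y' := Set.mem_singleton_iff.mp h
        exact hP.2.1 (by rw [hxy]; exact hy')
    · have hdd := hW x0 (Set.mem_insert _ _) y' (Set.mem_insert_of_mem _ hy')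
      rw [SimpleGraph.dist_self] at hdd
      have : y' = x0 := (hc.dist_eq_zero_iff).mp hdd
      exact hP.2.1 (this ▸ hy')
  have hx0E : x0 ∈ extShadow G x0 K := by
    rcases K.eq_empty_or_nonempty with rfl | ⟨y, hy⟩
    · right
      intro a ha b hb
      rcases ha with rfl | ha
      · rcases hb with rfl | hb
        · rfl
        · exact absurd hb (Set.notMem_empty b)
      · exact absurd ha (Set.notMem_empty a)
    · left
      refine Set.mem_iUnion₂.mpr ⟨y, hy, ?_⟩
      exact ⟨x0, subset_convHull _ (Set.mem_union_right _ (Set.mem_singleton _)), rfl⟩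
  have hdis : ∀ v, v ∈ shadow G K {x0} → v ∈ extShadow G x0 K → False := by
    rintro v ⟨y', hy'hull, hy'K⟩ hvE
    have hsub : convHull G ({x0} ∪ {v}) ⊆ extShadow G x0 K :=
      convHull_min cE (Set.union_subset (Set.singleton_subset_iff.mpr hx0E)
        (Set.singleton_subset_iff.mpr hvE))
    exact hKE y' hy'K (hsub hy'hull)
  have hcompl : (extShadow G x0 K)ᶜ = shadow G K {x0} := by
    ext v
    simp only [Set.mem_compl_iff]
    constructor
    · intro hv
      rcases pmc_cover hc hP v with hK | hU | hW
      · exact hK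
      · exact absurd (Or.inl hU : v ∈ extShadow G x0 K) hv
      · exact absurd (Or.inr hW : v ∈ extShadow G x0 K) hv
    · intro hv hvE
      exact hdis v hv hvE
  refine ⟨extShadow G x0 K, ⟨cE, by rw [hcompl]; exact cK⟩,
    Set.singleton_subset_iff.mpr hx0E, ?_⟩
  intro y' hy'
  exact hKE y' hy'

lemma semispace_base [Fintype V] (hc : G.Connected) (hTC : TriangleCondition G)
    (h3 : ∀ (x0 : V) (K : Set V), PointedMaxClique G x0 K → SepByHalfspaces G {x0} K)
    {p : V} {S : Set V} (hS : IsSemispaceAt G p S)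
    {z1 : V} (hz1S : z1 ∈ S) (hz1 : G.Adj p z1) : IsHalfspace G S := by
  classical
  set K1 : Set V := {z | z ∈ S ∧ G.Adj p z} with hK1def
  have hK1clique : G.IsClique K1 := by
    intro z hz z' hz' hne
    by_contra hnadj
    have hd2 : G.dist z z' = 2 := by
      have hle : G.dist z z' ≤ 2 := by
        have htr := hc.dist_triangle (u := z) (v := p) (w := z')
        rw [SimpleGraph.dist_comm (u := z) (v := p), dist_adj hz.2, dist_adj hz'.2] at htr
        omega
      have h0 : G.dist z z' ≠ 0 := fun h => hne ((hc.dist_eq_zero_iff).mp h)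
      have h1 : G.dist z z' ≠ 1 := fun h => hnadj (SimpleGraph.dist_eq_one_iff_adj.mp h)
      omega
    have hpint : p ∈ interval G z z' := by
      simp only [interval, Set.mem_setOf_eq]
      rw [SimpleGraph.dist_comm (u := z) (v := p), dist_adj hz.2, dist_adj hz'.2, hd2]
    exact hS.2.1 (hS.1 z hz.1 z' hz'.1 hpint)
  have hclins : G.IsClique (insert p K1) := hK1clique.insert (fun b hb _ => hb.2)
  obtain ⟨M, hMcl, hsubM, hmaxM⟩ := exists_maximal_superset G.IsClique hclins
  have hpM : p ∈ M := hsubM (Set.mem_insert _ _)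
  set K := M \ {p} with hKdef
  have heqM : insert p K = M := by
    rw [hKdef, Set.insert_diff_singleton, Set.insert_eq_self.mpr hpM]
  have hPMC : PointedMaxClique G p K := by
    refine ⟨fun a ha b hb hne => hMcl ha.1 hb.1 hne, fun h => h.2 rfl, ?_, ?_⟩
    · rw [heqM]; exact hMcl
    · intro K' hK' hsub'
      rw [heqM] at hsub' ⊢
      exact hmaxM K' hK' hsub'
  obtain ⟨H, hH, hpH, hKH⟩ := h3 p K hPMC
  have hpH' : p ∈ H := Set.singleton_subset_iff.mp hpH
  obtain ⟨e1, e2⟩ := sep_shadow_eq hc hTC hPMC hH hpH' hKH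
  have hSsub : S ⊆ shadow G K {p} := by
    intro s hs
    have hTne : (interval G p s ∩ S).Nonempty := ⟨s, mem_interval_right p s, hs⟩
    obtain ⟨z, ⟨hzI, hzS⟩, hmin⟩ :=
      Set.exists_min_image _ (fun w => G.dist p w) (Set.toFinite _) hTne
    have himp : ∀ w, w ∈ interval G p z → w ∈ S → w = z := by
      intro w hwI hwS
      have hwIs : w ∈ interval G p s := interval_trans hc hwI hzI
      have hge : G.dist p z ≤ G.dist p w := hmin w ⟨hwIs, hwS⟩
      have hwz0 : G.dist w z = 0 := by
        simp only [interval, Set.mem_setOf_eq] at hwI; omega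
      exact (hc.dist_eq_zero_iff).mp hwz0
    have hzp : z ≠ p := fun h => hS.2.1 (h ▸ hzS)
    have hm0 : G.dist p z ≠ 0 := fun h => hzp ((hc.dist_eq_zero_iff).mp h).symm
    have hadjz : G.Adj p z := by
      by_cases hm1 : G.dist p z = 1
      · exact SimpleGraph.dist_eq_one_iff_adj.mp hm1
      · exfalso
        have hm2 : 2 ≤ G.dist p z := by omega
        have hub : G.dist z1 z ≤ G.dist p z + 1 := by
          have htr := hc.dist_triangle (u := z1) (v := p) (w := z)
          rw [SimpleGraph.dist_comm (u := z1) (v := p), dist_adj hz1] at htr; omega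
        have hlb : G.dist p z ≤ G.dist z1 z + 1 := by
          have htr := hc.dist_triangle (u := p) (v := z1) (w := z)
          rw [dist_adj hz1] at htr; omega
        rcases lt_trichotomy (G.dist z1 z) (G.dist p z) with hlt | heq | hgt
        · have hz1I : z1 ∈ interval G p z := by
            simp only [interval, Set.mem_setOf_eq]
            rw [dist_adj hz1]; omega
          have hz1z := himp z1 hz1I hz1S
          exact hm1 (by rw [← hz1z]; exact dist_adj hz1)
        · obtain ⟨x, hxp, hxz1, hdx⟩ := hTC z p z1 hz1 (by
            rw [SimpleGraph.dist_comm (u := z) (v := p),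
              SimpleGraph.dist_comm (u := z) (v := z1), heq])
          have hdzp : G.dist z p = G.dist p z := SimpleGraph.dist_comm
          have hxS : x ∈ S := by
            refine hS.1 z1 hz1S z hzS ?_
            simp only [interval, Set.mem_setOf_eq]
            rw [dist_adj hxz1, SimpleGraph.dist_comm (u := x) (v := z)]
            omega
          have hxI : x ∈ interval G p z := by
            simp only [interval, Set.mem_setOf_eq]
            rw [dist_adj hxp, SimpleGraph.dist_comm (u := x) (v := z)]
            omega
          have hxz := himp x hxI hxS
          exact hm1 (by rw [← hxz]; exact dist_adj hxp)
        · have hpI : p ∈ interval G z1 z := by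
            simp only [interval, Set.mem_setOf_eq]
            rw [SimpleGraph.dist_comm (u := z1) (v := p), dist_adj hz1]; omega
          exact hS.2.1 (hS.1 z1 hz1S z hzS hpI)
    have hzK : z ∈ K := ⟨hsubM (Set.mem_insert_of_mem _ ⟨hzS, hadjz⟩), hzp⟩
    exact ⟨z, interval_subset_convHull (A := ({p} ∪ {s} : Set V))
      (Set.mem_union_left _ (Set.mem_singleton _))
      (Set.mem_union_right _ (Set.mem_singleton _)) hzI, hzK⟩
  have hfin : shadow G K {p} = S := by
    refine hS.2.2 _ ?_ ?_ hSsub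
    · rw [e2]; exact hH.2
    · rw [e2]; exact fun h => h hpH'
  rw [← hfin, e2]
  exact ⟨hH.2, by rw [compl_compl]; exact hH.1⟩

lemma semispace_halfspace [Fintype V] (hc : G.Connected) (hTC : TriangleCondition G)
    (h3 : ∀ (x0 : V) (K : Set V), PointedMaxClique G x0 K → SepByHalfspaces G {x0} K) :
    ∀ (n : ℕ) (p : V) (S : Set V), IsSemispaceAt G p S →
      (∃ s ∈ S, G.dist p s ≤ n) → IsHalfspace G S := by
  intro n
  induction n with
  | zero =>
    rintro p S hS ⟨s, hsS, hd⟩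
    have hsp : s = p := ((hc.dist_eq_zero_iff).mp (by omega)).symm
    exact absurd (hsp ▸ hsS) hS.2.1
  | succ n ih =>
    rintro p S hS ⟨s0, hs0, hd⟩
    by_cases hnb : ∃ z ∈ S, G.Adj p z
    · obtain ⟨z1, hz1S, hz1⟩ := hnb
      exact semispace_base hc hTC h3 hS hz1S hz1
    · push_neg at hnb
      have hs0p : s0 ≠ p := fun h => hS.2.1 (h ▸ hs0)
      have hm0 : G.dist p s0 ≠ 0 := fun h => hs0p ((hc.dist_eq_zero_iff).mp h).symm
      obtain ⟨m', hm'⟩ : ∃ m', G.dist p s0 = m' + 1 := ⟨G.dist p s0 - 1, by omega⟩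
      obtain ⟨p', hadj, hdp'⟩ := exists_adj_dist hc hm'
      have hp'S : p' ∉ S := fun h => hnb p' h hadj
      obtain ⟨S', ⟨hS'c, hp'S'⟩, hSS', hmax'⟩ :=
        exists_maximal_superset (fun B => IsConvex G B ∧ p' ∉ B) ⟨hS.1, hp'S⟩
      have hsemi' : IsSemispaceAt G p' S' :=
        ⟨hS'c, hp'S', fun C hC hpC hsub => hmax' C ⟨hC, hpC⟩ hsub⟩
      have hhalf' : IsHalfspace G S' := ih p' S' hsemi' ⟨s0, hSS' hs0, by omega⟩
      have hpS' : p ∉ S' := by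
        intro hp
        refine hp'S' (hS'c p hp s0 (hSS' hs0) ?_)
        simp only [interval, Set.mem_setOf_eq]
        rw [dist_adj hadj]; omega
      have hfin : S' = S := hS.2.2 S' hS'c hpS' hSS'
      exact hfin ▸ hhalf'

lemma imp31 [Fintype V] (hc : G.Connected) (hTC : TriangleCondition G)
    (h3 : ∀ (x0 : V) (K : Set V), PointedMaxClique G x0 K → SepByHalfspaces G {x0} K) :
    IsS3 G := by
  intro p A hA hpA
  obtain ⟨S, ⟨hSc, hpS⟩, hAS, hmax⟩ :=
    exists_maximal_superset (fun B => IsConvex G B ∧ p ∉ B) ⟨hA, hpA⟩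
  have hsemi : IsSemispaceAt G p S := ⟨hSc, hpS, fun C hC hpC hsub => hmax C ⟨hC, hpC⟩ hsub⟩
  have hhalf : IsHalfspace G S := by
    rcases S.eq_empty_or_nonempty with rfl | ⟨s, hs⟩
    · exact ⟨fun u hu => absurd hu (Set.notMem_empty u),
        fun u _ v _ w _ => Set.notMem_empty w⟩
    · exact semispace_halfspace hc hTC h3 (G.dist p s) p S hsemi ⟨s, hs, le_refl _⟩
  exact ⟨Sᶜ, ⟨hhalf.2, by rw [compl_compl]; exact hhalf.1⟩,
    Set.singleton_subset_iff.mpr hpS, by rw [compl_compl]; exact hAS⟩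

end PaperS3
open PaperS3

/-- For a graph satisfying the triangle condition, the
following are equivalent: (i) `G` is `S3`; (ii) for every pointed maximal
clique `(x0, K)` the shadows `x0/K` and `K/x0` are convex and disjoint;
(iii) for every pointed maximal clique `(x0, K)`, `x0` and `K` are separated
by complementary halfspaces; (iv) for every pointed maximal clique `(x0, K)`,
the shadow `K/x0` and the extended shadow `x0//K` are convex. -/
theorem stmt14 {V : Type*} [Fintype V] (G : SimpleGraph V) (hconn : G.Connected)
    (hTC : TriangleCondition G) :
    List.TFAE
      [IsS3 G,
       ∀ (x0 : V) (K : Set V), PointedMaxClique G x0 K →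
         IsConvex G (shadow G {x0} K) ∧ IsConvex G (shadow G K {x0}) ∧
           Disjoint (shadow G {x0} K) (shadow G K {x0}),
       ∀ (x0 : V) (K : Set V), PointedMaxClique G x0 K →
         SepByHalfspaces G {x0} K,
       ∀ (x0 : V) (K : Set V), PointedMaxClique G x0 K →
         IsConvex G (shadow G K {x0}) ∧ IsConvex G (extShadow G x0 K)] := by
  tfae_have 1 → 3 := fun h1 x0 K hP => h1 x0 K (clique_convex hconn hP.1) hP.2.1
  tfae_have 3 → 2 := fun h3 => imp32 hconn hTC h3
  tfae_have 2 → 4 := fun h2 => imp24 hconn hTC h2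
  tfae_have 4 → 3 := fun h4 => imp43 hconn hTC h4
  tfae_have 3 → 1 := fun h3 => imp31 hconn hTC h3
  tfae_finish
end

section
/- If G is a meshed graph, then for every vertex u and every integer k ≥ 0, the ball B_k(u) induces an isometric subgraph of G: any two vertices x, y ∈ B_k(u) are joined by a shortest path of G all of whose vertices lie in B_k(u). -/
open PaperS3


private lemma dist_adj_le' {V : Type*} (G : SimpleGraph V) (hconn : G.Connected) {v w : V} (u : V)
    (h : G.Adj v w) : G.dist u w ≤ G.dist u v + 1 := by
  have h2 := hconn.dist_triangle (u := u) (v := v) (w := w)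
  have h1 : G.dist v w = 1 := SimpleGraph.dist_eq_one_iff_adj.mpr h
  omega

private lemma exists_adj_toward' {V : Type*} (G : SimpleGraph V) (hconn : G.Connected) {x y : V}
    (h : 1 ≤ G.dist y x) : ∃ t, G.Adj y t ∧ G.dist t x + 1 = G.dist y x := by
  obtain ⟨p, hp⟩ := hconn.exists_walk_length_eq_dist y x
  cases p with
  | nil => simp at h
  | @cons _ t _ ha q =>
    refine ⟨t, ha, ?_⟩
    have h1 : G.dist t x ≤ q.length := SimpleGraph.dist_le q
    have h2 : G.dist y x ≤ G.dist y t + G.dist t x := hconn.dist_triangle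
    have h3 : G.dist y t = 1 := SimpleGraph.dist_eq_one_iff_adj.mpr ha
    simp [SimpleGraph.Walk.length_cons] at hp
    omega

private lemma key'_s15 {V : Type*} (G : SimpleGraph V) (hconn : G.Connected) (hmsh : Meshed G)
    (u : V) (k : ℕ) (x y : V) (hx : G.dist u x ≤ k) (hy : G.dist u y ≤ k)
    (hd : 1 ≤ G.dist x y) :
    ∃ t, G.Adj y t ∧ G.dist x t + 1 = G.dist x y ∧ G.dist u t ≤ k := by
  by_contra hcon
  push_neg at hcon
  set m := G.dist x y with hmdef
  have S : ∀ j, 1 ≤ j → j ≤ m → ∃ w, G.dist x w + j = m + 1 ∧ G.dist u w + 1 ≤ k + j ∧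
      ∀ t, G.Adj w t → G.dist x t + j = m → k + j ≤ G.dist u t := by
    intro j
    induction j with
    | zero => omega
    | succ j ih =>
      intro _ hjm
      rcases Nat.eq_zero_or_pos j with hj | hj
      · subst hj
        refine ⟨y, by omega, by omega, fun t ht hdt => hcon t ht (by omega)⟩
      -- inductive step
      obtain ⟨w, hw1, hw2, hQ⟩ := ih hj (by omega)
      have hwx : 1 ≤ G.dist w x := by rw [SimpleGraph.dist_comm]; omega
      obtain ⟨w', hww', hw'⟩ := exists_adj_toward' G hconn hwx
      have hw'' : G.dist x w' + 1 = G.dist x w := by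
        rw [SimpleGraph.dist_comm (u := x) (v := w'), SimpleGraph.dist_comm (u := x) (v := w)]
        exact hw'
      refine ⟨w', by omega, ?_, ?_⟩
      · have := dist_adj_le' G hconn u hww'
        omega
      intro t ht hdt
      -- dist t w = 2
      have htw : G.dist t w = 2 := by
        have hup : G.dist t w ≤ 2 := by
          have h1 := hconn.dist_triangle (u := t) (v := w') (w := w)
          have h2 : G.dist t w' = 1 := SimpleGraph.dist_eq_one_iff_adj.mpr ht.symm
          have h3 : G.dist w' w = 1 := SimpleGraph.dist_eq_one_iff_adj.mpr hww'.symm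
          omega
        have hlow := hconn.dist_triangle (u := x) (v := t) (w := w)
        omega
      obtain ⟨s, hts, hws, hds⟩ := hmsh u t w htw
      have hxs : G.dist x s + j = m := by
        have h1 := dist_adj_le' G hconn x hts
        have h2 := hconn.dist_triangle (u := x) (v := s) (w := w)
        have h3 : G.dist s w = 1 := SimpleGraph.dist_eq_one_iff_adj.mpr (hws.symm)
        omega
      have := hQ s hws hxs
      omega
  obtain ⟨w, hw1, hw2, hQ⟩ := S m (by omega) le_rfl
  have hxw : G.dist x w = 1 := by omega
  have hadj : G.Adj w x := (SimpleGraph.dist_eq_one_iff_adj.mp hxw).symm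
  have := hQ x hadj (by simp)
  omega

/-- In a meshed graph, every ball `B_k(u)` induces an
isometric subgraph: any `x, y ∈ B_k(u)` are joined by a shortest path of `G`
all of whose vertices lie in `B_k(u)`. -/
theorem stmt15 {V : Type*} [Fintype V] (G : SimpleGraph V) (hconn : G.Connected)
    (hm : Meshed G) (u : V) (k : ℕ) (x y : V)
    (hx : G.dist u x ≤ k) (hy : G.dist u y ≤ k) :
    ∃ p : G.Walk x y, p.length = G.dist x y ∧
      ∀ w ∈ p.support, G.dist u w ≤ k := by
  have main : ∀ n : ℕ, ∀ y : V, G.dist u y ≤ k → G.dist x y = n →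
      ∃ p : G.Walk x y, p.length = G.dist x y ∧ ∀ w ∈ p.support, G.dist u w ≤ k := by
    intro n
    induction n with
    | zero =>
      intro y hy h0
      have hxy : x = y := (hconn.dist_eq_zero_iff).mp h0
      subst hxy
      exact ⟨SimpleGraph.Walk.nil, by simp [h0], by simpa using hx⟩
    | succ n ih =>
      intro y hy hn
      obtain ⟨t, hadj, hdt, hut⟩ := key'_s15 G hconn hm u k x y hx hy (by omega)
      obtain ⟨p, hp1, hp2⟩ := ih t hut (by omega)
      refine ⟨p.concat hadj.symm, ?_, ?_⟩
      · rw [SimpleGraph.Walk.length_concat]; omega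
      · intro w hw
        rw [SimpleGraph.Walk.support_concat, List.mem_append] at hw
        rcases hw with hw | hw
        · exact hp2 w hw
        · simp at hw; subst hw; exact hy
  exact main (G.dist x y) y hy rfl
end

section
/- All metric triangles of a meshed graph G are equilateral: if v1 v2 v3 is a metric triangle of G, then d(v1,v2) = d(v2,v3) = d(v3,v1). -/
open PaperS3

private lemma key {V : Type*} (G : SimpleGraph V) (hconn : G.Connected)
    (hm : Meshed G) (u v w : V)
    (hv : interval G v u ∩ interval G v w = {v})
    (hw : interval G w u ∩ interval G w v = {w}) :
    G.dist u v = G.dist u w := by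
  classical
  set m := G.dist v w with hmdef
  have adjstep : ∀ z a b : V, G.Adj a b → G.dist z b ≤ G.dist z a + 1 := by
    intro z a b hab
    have h1 : G.dist z b ≤ G.dist z a + G.dist a b := hconn.dist_triangle
    have h2 : G.dist a b = 1 := SimpleGraph.dist_eq_one_iff_adj.mpr hab
    omega
  rcases Nat.eq_zero_or_pos m with hm0 | hmpos
  · have hvw : v = w := (hconn.dist_eq_zero_iff).mp hm0
    rw [hvw]
  set Geo : (ℕ → V) → Prop :=
    fun g => g 0 = v ∧ g m = w ∧ ∀ i < m, G.Adj (g i) (g (i+1)) with hGeoDef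
  set F : (ℕ → V) → ℕ := fun g => ∑ i ∈ Finset.range (m+1), G.dist u (g i) with hFdef
  have hex : ∃ n, ∃ g, Geo g ∧ F g = n := by
    obtain ⟨p, hp⟩ := hconn.exists_walk_length_eq_dist v w
    have hp' : p.length = m := by rw [hmdef]; exact hp
    refine ⟨_, p.getVert, ⟨p.getVert_zero, ?_, ?_⟩, rfl⟩
    · rw [← hp']; exact p.getVert_length
    · intro i hi
      exact p.adj_getVert_succ (by rw [hp']; exact hi)
  obtain ⟨g, hg, hFg⟩ := Nat.find_spec hex
  have hmin : ∀ g', Geo g' → F g ≤ F g' := by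
    intro g' hg'
    rw [hFg]
    exact Nat.find_le ⟨g', hg', rfl⟩
  obtain ⟨hg0, hgm, hadj⟩ := hg
  have hdvle : ∀ i, i ≤ m → G.dist v (g i) ≤ i := by
    intro i
    induction i with
    | zero =>
      intro _
      rw [hg0]
      simp [SimpleGraph.dist_self]
    | succ n ih =>
      intro hn
      have h1 : G.dist v (g n) ≤ n := ih (by omega)
      have h2 := adjstep v (g n) (g (n+1)) (hadj n (by omega))
      omega
  have hdwle : ∀ j, j ≤ m → G.dist (g (m - j)) w ≤ j := by
    intro j
    induction j with
    | zero =>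
      intro _
      simp only [Nat.sub_zero]
      rw [hgm]
      simp [SimpleGraph.dist_self]
    | succ n ih =>
      intro hn
      have h1 : G.dist (g (m - n)) w ≤ n := ih (by omega)
      have hadj' := hadj (m - (n+1)) (by omega)
      have he : m - (n+1) + 1 = m - n := by omega
      rw [he] at hadj'
      have h2 : G.dist (g (m - (n+1))) w ≤ G.dist (g (m - (n+1))) (g (m - n)) + G.dist (g (m - n)) w :=
        hconn.dist_triangle
      have h3 : G.dist (g (m - (n+1))) (g (m - n)) = 1 :=
        SimpleGraph.dist_eq_one_iff_adj.mpr hadj'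
      omega
  have heqv : ∀ i, i ≤ m → G.dist v (g i) = i := by
    intro i hi
    have h1 := hdvle i hi
    have h2 := hdwle (m - i) (by omega)
    rw [(by omega : m - (m - i) = i)] at h2
    have h3 : G.dist v w ≤ G.dist v (g i) + G.dist (g i) w := hconn.dist_triangle
    omega
  have heqw : ∀ i, i ≤ m → G.dist (g i) w = m - i := by
    intro i hi
    have h1 := hdvle i hi
    have h2 := hdwle (m - i) (by omega)
    rw [(by omega : m - (m - i) = i)] at h2
    have h3 : G.dist v w ≤ G.dist v (g i) + G.dist (g i) w := hconn.dist_triangle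
    omega
  have hconv : ∀ i, i + 2 ≤ m →
      2 * G.dist u (g (i+1)) ≤ G.dist u (g i) + G.dist u (g (i+2)) := by
    intro i hi
    have hd2 : G.dist (g i) (g (i+2)) = 2 := by
      have a1 := hadj i (by omega)
      have a2 := hadj (i+1) (by omega)
      have e1 : G.dist (g i) (g (i+1)) = 1 := SimpleGraph.dist_eq_one_iff_adj.mpr a1
      have e2 : G.dist (g (i+1)) (g (i+2)) = 1 := SimpleGraph.dist_eq_one_iff_adj.mpr a2
      have hle : G.dist (g i) (g (i+2)) ≤ G.dist (g i) (g (i+1)) + G.dist (g (i+1)) (g (i+2)) :=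
        hconn.dist_triangle
      have t : G.dist v (g (i+2)) ≤ G.dist v (g i) + G.dist (g i) (g (i+2)) := hconn.dist_triangle
      have q1 := heqv i (by omega)
      have q2 := heqv (i+2) hi
      omega
    obtain ⟨x, hx1, hx2, hx3⟩ := hm u (g i) (g (i+2)) hd2
    set g' := Function.update g (i+1) x with hg'def
    have hGeo' : Geo g' := by
      refine ⟨?_, ?_, ?_⟩
      · rw [hg'def, Function.update_of_ne (by omega : (0:ℕ) ≠ i+1)]
        exact hg0
      · rw [hg'def, Function.update_of_ne (by omega : m ≠ i+1)]
        exact hgm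
      · intro j hj
        rcases eq_or_ne j i with rfl | hji
        · rw [hg'def, Function.update_of_ne (by omega : j ≠ j+1), Function.update_self]
          exact hx1
        · rcases eq_or_ne j (i+1) with rfl | hji1
          · rw [hg'def, Function.update_self,
              Function.update_of_ne (by omega : i+1+1 ≠ i+1)]
            exact hx2.symm
          · rw [hg'def, Function.update_of_ne hji1,
              Function.update_of_ne (by omega : j+1 ≠ i+1)]
            exact hadj j hj
    have hmem : i + 1 ∈ Finset.range (m+1) := by
      simp only [Finset.mem_range]; omega
    have e1 : ∑ j ∈ (Finset.range (m+1)).erase (i+1), G.dist u (g' j) + G.dist u (g' (i+1))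
        = ∑ j ∈ Finset.range (m+1), G.dist u (g' j) :=
      Finset.sum_erase_add (Finset.range (m+1)) (fun j => G.dist u (g' j)) hmem
    have e2 : ∑ j ∈ (Finset.range (m+1)).erase (i+1), G.dist u (g j) + G.dist u (g (i+1))
        = ∑ j ∈ Finset.range (m+1), G.dist u (g j) :=
      Finset.sum_erase_add (Finset.range (m+1)) (fun j => G.dist u (g j)) hmem
    have e3 : ∑ j ∈ (Finset.range (m+1)).erase (i+1), G.dist u (g' j)
        = ∑ j ∈ (Finset.range (m+1)).erase (i+1), G.dist u (g j) := by
      apply Finset.sum_congr rfl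
      intro j hj
      rw [hg'def, Function.update_of_ne (Finset.ne_of_mem_erase hj)]
    have e4 : g' (i+1) = x := by rw [hg'def, Function.update_self]
    have hle := hmin g' hGeo'
    have hFg' : F g' = ∑ j ∈ Finset.range (m+1), G.dist u (g' j) := rfl
    have hFgg : F g = ∑ j ∈ Finset.range (m+1), G.dist u (g j) := rfl
    rw [e3, e4] at e1
    rw [← hFg'] at e1
    rw [← hFgg] at e2
    omega
  have hD0 : G.dist u (g 0) ≤ G.dist u (g 1) := by
    by_contra hcon
    push_neg at hcon
    have hstep := adjstep u (g 1) (g 0) (hadj 0 hmpos).symm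
    have hq1 : G.dist v (g 1) = 1 := heqv 1 hmpos
    have hq2 : G.dist (g 1) w = m - 1 := heqw 1 hmpos
    have hmem : g 1 ∈ interval G v u ∩ interval G v w := by
      constructor
      · show G.dist v (g 1) + G.dist (g 1) u = G.dist v u
        have h0 : G.dist u (g 0) = G.dist v u := by rw [hg0, SimpleGraph.dist_comm]
        have h1 : G.dist (g 1) u = G.dist u (g 1) := SimpleGraph.dist_comm
        omega
      · show G.dist v (g 1) + G.dist (g 1) w = G.dist v w
        omega
    rw [hv] at hmem
    have hg1 : g 1 = v := hmem
    rw [hg1] at hq1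
    simp [SimpleGraph.dist_self] at hq1
  have hDm : G.dist u (g m) ≤ G.dist u (g (m-1)) := by
    by_contra hcon
    push_neg at hcon
    have hadj' := hadj (m-1) (by omega)
    rw [(by omega : m - 1 + 1 = m)] at hadj'
    have hstep := adjstep u (g (m-1)) (g m) hadj'
    have hq1 : G.dist v (g (m-1)) = m - 1 := heqv (m-1) (by omega)
    have hq2 : G.dist (g (m-1)) w = 1 := by
      have := heqw (m-1) (by omega)
      omega
    have hmem : g (m-1) ∈ interval G w u ∩ interval G w v := by
      constructor
      · show G.dist w (g (m-1)) + G.dist (g (m-1)) u = G.dist w u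
        have h0 : G.dist u (g m) = G.dist w u := by rw [hgm, SimpleGraph.dist_comm]
        have h1 : G.dist (g (m-1)) u = G.dist u (g (m-1)) := SimpleGraph.dist_comm
        have h2 : G.dist w (g (m-1)) = G.dist (g (m-1)) w := SimpleGraph.dist_comm
        omega
      · show G.dist w (g (m-1)) + G.dist (g (m-1)) v = G.dist w v
        have h2 : G.dist w (g (m-1)) = G.dist (g (m-1)) w := SimpleGraph.dist_comm
        have h3 : G.dist (g (m-1)) v = G.dist v (g (m-1)) := SimpleGraph.dist_comm
        have h4 : G.dist w v = G.dist v w := SimpleGraph.dist_comm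
        omega
    rw [hw] at hmem
    have hgw : g (m-1) = w := hmem
    rw [hgw] at hq2
    simp [SimpleGraph.dist_self] at hq2
  have hup : ∀ i, i < m → G.dist u (g i) ≤ G.dist u (g (i+1)) := by
    intro i
    induction i with
    | zero => intro _; exact hD0
    | succ n ih =>
      intro hn
      have h1 := ih (by omega)
      have h2 := hconv n (by omega)
      show G.dist u (g (n+1)) ≤ G.dist u (g (n+2))
      omega
  have hdownaux : ∀ k j, j + k + 1 = m → G.dist u (g (j+1)) ≤ G.dist u (g j) := by
    intro k
    induction k with
    | zero =>
      intro j hj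
      have e : j + 1 = m := by omega
      have e2 : j = m - 1 := by omega
      rw [e, e2]
      exact hDm
    | succ n ih =>
      intro j hj
      have h1 := ih (j+1) (by omega)
      rw [(by omega : j+1+1 = j+2)] at h1
      have h2 := hconv j (by omega)
      omega
  have hup2 : ∀ i, i ≤ m → G.dist u (g 0) ≤ G.dist u (g i) := by
    intro i
    induction i with
    | zero => intro _; exact le_rfl
    | succ n ih =>
      intro hn
      have h1 := ih (by omega)
      have h2 := hup n (by omega)
      omega
  have hdown2 : ∀ i, i ≤ m → G.dist u (g i) ≤ G.dist u (g 0) := by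
    intro i
    induction i with
    | zero => intro _; exact le_rfl
    | succ n ih =>
      intro hn
      have h1 := ih (by omega)
      have h2 := hdownaux (m - (n+1)) n (by omega)
      omega
  have hfinal : G.dist u (g 0) = G.dist u (g m) :=
    le_antisymm (hup2 m le_rfl) (hdown2 m le_rfl)
  rw [hg0, hgm] at hfinal
  exact hfinal


/-- All metric triangles of a meshed graph are equilateral. -/
theorem stmt16 {V : Type*} [Fintype V] (G : SimpleGraph V) (hconn : G.Connected)
    (hm : Meshed G) (v1 v2 v3 : V)
    (h1 : interval G v1 v2 ∩ interval G v1 v3 = {v1})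
    (h2 : interval G v2 v1 ∩ interval G v2 v3 = {v2})
    (h3 : interval G v3 v1 ∩ interval G v3 v2 = {v3}) :
    G.dist v1 v2 = G.dist v2 v3 ∧ G.dist v2 v3 = G.dist v3 v1 := by
  have k1 : G.dist v1 v2 = G.dist v1 v3 := key G hconn hm v1 v2 v3 h2 h3
  have k2 : G.dist v2 v1 = G.dist v2 v3 := by
    apply key G hconn hm v2 v1 v3 h1
    rw [Set.inter_comm]
    exact h3
  constructor
  · rw [SimpleGraph.dist_comm]
    exact k2
  · rw [← k2, SimpleGraph.dist_comm, k1, SimpleGraph.dist_comm]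
end
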